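/- arXiv:1904.03880 — 2 statements merged into one kernel-verified Lean document; each statement's English description precedes it below -/
import Mathlib

section
/- Let (G,B,w) be a finite weighted graph with boundary and interior Ω, and let V be an n-dimensional subspace of {ξ ∈ A^{k+1}(G) : ξ = dη for some η ∈ A^k(G), and δξ = 0 on Ω}. Let A: V → V be the linear operator with ⟨Aξ, η⟩_G = ⟨𝐍ξ, 𝐍η⟩_{∂Ω} for all ξ, η ∈ V. Then A is positive definite and self-adjoint, and the i-th positive eigenvalue of the DtN map T^{(k)}_{δd} satisfies λ_i(T^{(k)}_{δd}) ≤ λ_i(A) for i = 1,...,n. -/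
open scoped Classical

namespace GraphHodge


variable {X : Type*}

/-- A tuple of vertices forms a clique: any two distinct indices give adjacent vertices. -/
def IsTupleClique (G : SimpleGraph X) {m : ℕ} (v : Fin m → X) : Prop :=
  ∀ i j : Fin m, i ≠ j → G.Adj (v i) (v j)

/-- Indicator function of cliques. -/
noncomputable def cliqueInd (G : SimpleGraph X) {m : ℕ} (v : Fin m → X) : ℝ :=
  if IsTupleClique G v then 1 else 0

/-- A `k`-form on a graph: skew-symmetric and supported on `(k+1)`-cliques. -/
def IsGraphForm (G : SimpleGraph X) (k : ℕ) (α : (Fin (k + 1) → X) → ℝ) : Prop :=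
  (∀ v, ¬ IsTupleClique G v → α v = 0) ∧
  ∀ (σ : Equiv.Perm (Fin (k + 1))) (v : Fin (k + 1) → X),
    α (v ∘ σ) = ((Equiv.Perm.sign σ : ℤ) : ℝ) * α v

/-- The exterior differential of a `k`-form on a graph. -/
noncomputable def gd (G : SimpleGraph X) {k : ℕ} (α : (Fin (k + 1) → X) → ℝ) :
    (Fin (k + 2) → X) → ℝ :=
  fun v => cliqueInd G v * ∑ j : Fin (k + 2), (-1 : ℝ) ^ (j : ℕ) * α (v ∘ j.succAbove)

/-- Tensor product of an `r`-form and an `s`-form on a graph. -/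
noncomputable def gtensor (G : SimpleGraph X) {r s : ℕ}
    (α : (Fin (r + 1) → X) → ℝ) (β : (Fin (s + 1) → X) → ℝ) :
    (Fin (r + s + 1) → X) → ℝ :=
  fun v => cliqueInd G v * α (fun i => v ⟨i.1, by have := i.2; omega⟩) *
    β (fun i => v ⟨r + i.1, by have := i.2; omega⟩)

/-- Skew-symmetrization operator on functions of vertex tuples. -/
noncomputable def skewSym {m : ℕ} (f : (Fin m → X) → ℝ) : (Fin m → X) → ℝ :=
  fun v => ((m.factorial : ℝ))⁻¹ *
    ∑ σ : Equiv.Perm (Fin m), ((Equiv.Perm.sign σ : ℤ) : ℝ) * f (v ∘ σ)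

/-- Wedge product of graph forms: skew-symmetrization of the tensor product. -/
noncomputable def gwedge (G : SimpleGraph X) {r s : ℕ}
    (α : (Fin (r + 1) → X) → ℝ) (β : (Fin (s + 1) → X) → ℝ) :
    (Fin (r + s + 1) → X) → ℝ :=
  skewSym (gtensor G α β)

/-- A positive weight on all cliques of a graph, symmetric in its arguments and
vanishing off cliques. -/
structure GraphWeight (G : SimpleGraph X) where
  w : ∀ {m : ℕ}, (Fin (m + 1) → X) → ℝ
  symm : ∀ {m : ℕ} (σ : Equiv.Perm (Fin (m + 1))) (v : Fin (m + 1) → X), w (v ∘ σ) = w v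
  pos : ∀ {m : ℕ} (v : Fin (m + 1) → X), IsTupleClique G v → 0 < w v
  eq_zero : ∀ {m : ℕ} (v : Fin (m + 1) → X), ¬ IsTupleClique G v → w v = 0

variable {G : SimpleGraph X}

/-- The weighted inner product on `k`-forms of a finite weighted graph. -/
noncomputable def formInner [Fintype X] (w : GraphWeight G) {k : ℕ}
    (α β : (Fin (k + 1) → X) → ℝ) : ℝ :=
  (((k + 1).factorial : ℝ))⁻¹ * ∑ v : Fin (k + 1) → X, α v * β v * w.w v

/-- The codifferential (formal adjoint of `gd`) on a finite weighted graph. -/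
noncomputable def gdelta [Fintype X] (w : GraphWeight G) {k : ℕ}
    (α : (Fin (k + 2) → X) → ℝ) : (Fin (k + 1) → X) → ℝ :=
  fun v => (w.w v)⁻¹ * ∑ u : X, α (Fin.cons u v) * w.w (Fin.cons u v)

/-- `(G, B)` is a graph with boundary `B`: no edges inside `B`, and every boundary
vertex is adjacent to some interior vertex. -/
def IsBoundary (G : SimpleGraph X) (B : Set X) : Prop :=
  (∀ a ∈ B, ∀ b ∈ B, ¬ G.Adj a b) ∧ ∀ b ∈ B, ∃ a, a ∉ B ∧ G.Adj b a

/-- A boundary tuple: a clique whose first vertex is in `B` and the rest interior. -/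
def IsBdryTuple (G : SimpleGraph X) (B : Set X) {k : ℕ} (v : Fin (k + 1) → X) : Prop :=
  IsTupleClique G v ∧ v 0 ∈ B ∧ ∀ i : Fin k, v i.succ ∉ B

/-- A boundary `k`-form: supported on boundary `(k+1)`-cliques and skew-symmetric in
its last `k` variables. -/
def IsBdryForm (G : SimpleGraph X) (B : Set X) (k : ℕ) (φ : (Fin (k + 1) → X) → ℝ) : Prop :=
  (∀ v, ¬ IsBdryTuple G B v → φ v = 0) ∧
  ∀ (σ : Equiv.Perm (Fin k)) (v : Fin (k + 1) → X),
    φ (Fin.cons (v 0) (fun i => v (σ i).succ)) = ((Equiv.Perm.sign σ : ℤ) : ℝ) * φ v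

/-- Inner product over tuples entirely inside the interior `Ω = Bᶜ`. -/
noncomputable def innerInt [Fintype X] (w : GraphWeight G) (B : Set X) {k : ℕ}
    (α β : (Fin (k + 1) → X) → ℝ) : ℝ :=
  (((k + 1).factorial : ℝ))⁻¹ *
    ∑ v : Fin (k + 1) → X, (if ∀ i, v i ∉ B then (1 : ℝ) else 0) * (α v * β v * w.w v)

/-- Boundary inner product: first vertex in `B`, the others interior. -/
noncomputable def innerBdry [Fintype X] (w : GraphWeight G) (B : Set X) {k : ℕ}
    (α β : (Fin (k + 1) → X) → ℝ) : ℝ :=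
  ((k.factorial : ℝ))⁻¹ *
    ∑ v : Fin (k + 1) → X,
      (if v 0 ∈ B ∧ ∀ i : Fin k, v i.succ ∉ B then (1 : ℝ) else 0) * (α v * β v * w.w v)

/-- The normal-trace operator `𝐍` on `(k+1)`-forms. -/
noncomputable def Nop [Fintype X] (w : GraphWeight G) (B : Set X) {k : ℕ}
    (α : (Fin (k + 2) → X) → ℝ) : (Fin (k + 1) → X) → ℝ :=
  fun v => (w.w v)⁻¹ *
    ∑ u : X, (if u ∉ B then (1 : ℝ) else 0) * α (Fin.cons u v) * w.w (Fin.cons u v)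

/-- The Dirichlet-trace operator `𝐃`: forget the boundary vertex. -/
def Dop {k : ℕ} (α : (Fin (k + 1) → X) → ℝ) : (Fin (k + 2) → X) → ℝ :=
  fun v => α (fun i => v i.succ)

/-! ### Auxiliary lemmas -/

section Aux

variable {G : SimpleGraph X}

/-- Real-valued sign of a permutation. -/
noncomputable def sgn {m : ℕ} (σ : Equiv.Perm (Fin m)) : ℝ :=
  ((Equiv.Perm.sign σ : ℤ) : ℝ)

lemma sgn_mul {m : ℕ} (σ τ : Equiv.Perm (Fin m)) : sgn (σ * τ) = sgn σ * sgn τ := by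
  simp [sgn]

lemma sgn_inv {m : ℕ} (σ : Equiv.Perm (Fin m)) : sgn σ⁻¹ = sgn σ := by
  simp [sgn]

lemma sgn_mul_self {m : ℕ} (σ : Equiv.Perm (Fin m)) : sgn σ * sgn σ = 1 := by
  rw [← sgn_mul]
  simp [sgn]

lemma sgn_cycleRange {m : ℕ} (j : Fin (m + 1)) :
    sgn (Fin.cycleRange j) = (-1 : ℝ) ^ (j : ℕ) := by
  rw [sgn, Fin.sign_cycleRange]
  push_cast
  rfl

lemma isTupleClique_comp {m : ℕ} (σ : Equiv.Perm (Fin m)) (v : Fin m → X) :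
    IsTupleClique G (v ∘ σ) ↔ IsTupleClique G v := by
  constructor
  · intro h i j hij
    have hne : σ.symm i ≠ σ.symm j := fun hc => hij (by simpa using congrArg σ hc)
    have := h (σ.symm i) (σ.symm j) hne
    simpa using this
  · intro h i j hij
    exact h (σ i) (σ j) (fun hc => hij (σ.injective hc))

lemma cliqueInd_comp {m : ℕ} (σ : Equiv.Perm (Fin m)) (v : Fin m → X) :
    cliqueInd G (v ∘ σ) = cliqueInd G v := by
  simp only [cliqueInd, isTupleClique_comp]

lemma IsTupleClique.inj {m : ℕ} {v : Fin m → X} (h : IsTupleClique G v) :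
    Function.Injective v := by
  intro i j hij
  by_contra hne
  exact (h i j hne).ne hij

lemma GraphWeight.nonneg (w : GraphWeight G) {m : ℕ} (v : Fin (m + 1) → X) : 0 ≤ w.w v := by
  by_cases h : IsTupleClique G v
  · exact (w.pos v h).le
  · rw [w.eq_zero v h]

lemma clique_of_w_ne_zero {w : GraphWeight G} {m : ℕ} {v : Fin (m + 1) → X}
    (h : w.w v ≠ 0) : IsTupleClique G v := by
  by_contra hc
  exact h (w.eq_zero v hc)

/-- The permutation of `Fin (m+1)` fixing `0` induced by a permutation of `Fin m`. -/
noncomputable def consPerm {m : ℕ} (σ : Equiv.Perm (Fin m)) : Equiv.Perm (Fin (m + 1)) :=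
  Equiv.Perm.decomposeFin.symm (0, σ)

lemma consPerm_zero {m : ℕ} (σ : Equiv.Perm (Fin m)) : consPerm σ 0 = 0 :=
  Equiv.Perm.decomposeFin_symm_apply_zero 0 σ

lemma consPerm_succ {m : ℕ} (σ : Equiv.Perm (Fin m)) (i : Fin m) :
    consPerm σ i.succ = (σ i).succ := by
  rw [consPerm, Equiv.Perm.decomposeFin_symm_apply_succ]
  simp

lemma sgn_consPerm {m : ℕ} (σ : Equiv.Perm (Fin m)) : sgn (consPerm σ) = sgn σ := by
  rw [sgn, consPerm, Equiv.Perm.decomposeFin.symm_sign, if_pos rfl, one_mul, sgn]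

lemma comp_consPerm {m : ℕ} (σ : Equiv.Perm (Fin m)) (v : Fin (m + 1) → X) :
    v ∘ consPerm σ = Fin.cons (v 0) (fun i => v (σ i).succ) := by
  funext i
  induction i using Fin.cases with
  | zero => simp [consPerm_zero]
  | succ i => simp [consPerm_succ]

lemma cons_comp_consPerm {m : ℕ} (σ : Equiv.Perm (Fin m)) (a : X) (t : Fin m → X) :
    (Fin.cons a t : Fin (m + 1) → X) ∘ consPerm σ = Fin.cons a (t ∘ σ) := by
  rw [comp_consPerm]
  simp only [Fin.cons_zero, Fin.cons_succ]
  rfl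

lemma eq_consPerm_of_fix_zero {m : ℕ} (ρ : Equiv.Perm (Fin (m + 1))) (h : ρ 0 = 0) :
    ∃ e : Equiv.Perm (Fin m), ρ = consPerm e := by
  refine ⟨(Equiv.Perm.decomposeFin ρ).2, ?_⟩
  have h1 : Equiv.Perm.decomposeFin.symm (Equiv.Perm.decomposeFin ρ) = ρ :=
    Equiv.symm_apply_apply _ _
  have h2 : (Equiv.Perm.decomposeFin ρ).1 = 0 := by
    have := Equiv.Perm.decomposeFin_symm_apply_zero (Equiv.Perm.decomposeFin ρ).1
      (Equiv.Perm.decomposeFin ρ).2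
    rw [h1] at this
    rw [← this, h]
  rw [consPerm, ← h2, Prod.mk.eta]
  exact h1.symm

lemma succAbove_eq_comp {m : ℕ} (j : Fin (m + 1)) :
    (Fin.succAbove j : Fin m → Fin (m + 1)) = ⇑(Fin.cycleRange j)⁻¹ ∘ Fin.succ := by
  funext i
  have h := Fin.cycleRange_succAbove j i
  simp only [Function.comp_apply]
  rw [Equiv.Perm.inv_def, Equiv.eq_symm_apply, h]

lemma comp_succAbove {m : ℕ} (σ : Equiv.Perm (Fin (m + 1))) (j : Fin (m + 1)) :
    ∃ e : Equiv.Perm (Fin m), (⇑σ ∘ Fin.succAbove j = Fin.succAbove (σ j) ∘ ⇑e) ∧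
      sgn e = (-1 : ℝ) ^ ((σ j : ℕ) + (j : ℕ)) * sgn σ := by
  set ρ : Equiv.Perm (Fin (m + 1)) :=
    Fin.cycleRange (σ j) * σ * (Fin.cycleRange j)⁻¹ with hρdef
  have hj0 : (Fin.cycleRange j)⁻¹ 0 = j := by
    rw [Equiv.Perm.inv_def, Equiv.symm_apply_eq, Fin.cycleRange_self]
  have hρ0 : ρ 0 = 0 := by
    simp only [hρdef, Equiv.Perm.coe_mul, Function.comp_apply, hj0, Fin.cycleRange_self]
  obtain ⟨e, he⟩ := eq_consPerm_of_fix_zero ρ hρ0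
  refine ⟨e, ?_, ?_⟩
  · funext i
    have h1 : Fin.succAbove j i = (Fin.cycleRange j)⁻¹ i.succ := by
      rw [succAbove_eq_comp]; rfl
    have h2 : ρ i.succ = (e i).succ := by rw [he, consPerm_succ]
    have h3 : Fin.succAbove (σ j) (e i) = (Fin.cycleRange (σ j))⁻¹ (e i).succ := by
      rw [succAbove_eq_comp]; rfl
    simp only [Function.comp_apply, h1, h3, ← h2, hρdef]
    simp [Equiv.Perm.mul_apply]
  · have h4 : sgn e = sgn ρ := by rw [he, sgn_consPerm]
    rw [h4, hρdef, sgn_mul, sgn_mul, sgn_inv, sgn_cycleRange, sgn_cycleRange]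
    ring

lemma neg_one_pow_sq (j : ℕ) : (-1 : ℝ) ^ j * (-1 : ℝ) ^ j = 1 := by
  rw [← pow_add]
  exact Even.neg_one_pow ⟨j, rfl⟩

lemma gd_comp_perm {k : ℕ} {α : (Fin (k + 1) → X) → ℝ} (hα : IsGraphForm G k α)
    (σ : Equiv.Perm (Fin (k + 2))) (v : Fin (k + 2) → X) :
    gd G α (v ∘ σ) = sgn σ * gd G α v := by
  unfold gd
  rw [cliqueInd_comp]
  have key : ∀ j : Fin (k + 2),
      (-1 : ℝ) ^ (j : ℕ) * α ((v ∘ σ) ∘ Fin.succAbove j) =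
        sgn σ * ((-1 : ℝ) ^ ((σ j : ℕ)) * α (v ∘ Fin.succAbove (σ j))) := by
    intro j
    obtain ⟨e, hfun, hsgn⟩ := comp_succAbove σ j
    have h1 : (v ∘ σ) ∘ Fin.succAbove j = (v ∘ Fin.succAbove (σ j)) ∘ e := by
      rw [Function.comp_assoc, hfun, Function.comp_assoc]
    rw [h1, hα.2 e, ← sgn]
    rw [hsgn, pow_add]
    linear_combination (sgn σ * (-1:ℝ) ^ ((σ j : ℕ)) * α (v ∘ Fin.succAbove (σ j))) *
      neg_one_pow_sq (j : ℕ)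
  calc cliqueInd G v * ∑ j : Fin (k + 2), (-1:ℝ) ^ (j:ℕ) * α ((v ∘ σ) ∘ Fin.succAbove j)
      = cliqueInd G v * ∑ j : Fin (k + 2),
          sgn σ * ((-1:ℝ) ^ ((σ j : ℕ)) * α (v ∘ Fin.succAbove (σ j))) := by
        rw [Finset.sum_congr rfl (fun j _ => key j)]
    _ = sgn σ * (cliqueInd G v * ∑ j : Fin (k + 2),
          (-1:ℝ) ^ ((σ j : ℕ)) * α (v ∘ Fin.succAbove (σ j))) := by
        rw [← Finset.mul_sum]; ring
    _ = sgn σ * (cliqueInd G v * ∑ j : Fin (k + 2),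
          (-1:ℝ) ^ ((j : ℕ)) * α (v ∘ Fin.succAbove j)) := by
        rw [Equiv.sum_comp σ (fun m => (-1:ℝ) ^ ((m : ℕ)) * α (v ∘ Fin.succAbove m))]

lemma gd_isGraphForm {k : ℕ} {α : (Fin (k + 1) → X) → ℝ} (hα : IsGraphForm G k α) :
    IsGraphForm G (k + 1) (gd G α) :=
  ⟨fun v hv => by simp [gd, cliqueInd, hv], fun σ v => gd_comp_perm hα σ v⟩

end Aux

section Aux2

variable {G : SimpleGraph X} [Fintype X]

lemma sum_comp_perm {m : ℕ} (σ : Equiv.Perm (Fin m)) (f : (Fin m → X) → ℝ) :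
    ∑ v : Fin m → X, f (v ∘ σ) = ∑ v : Fin m → X, f v := by
  apply Fintype.sum_bijective (fun v : Fin m → X => v ∘ σ)
  · constructor
    · intro a b hab
      funext i
      have := congrFun hab (σ.symm i)
      simpa using this
    · intro b
      refine ⟨b ∘ ⇑σ.symm, ?_⟩
      funext i
      simp
  · intro v
    rfl

lemma sum_cons_decomp {m : ℕ} (f : (Fin (m + 1) → X) → ℝ) :
    ∑ v : Fin (m + 1) → X, f v = ∑ a : X, ∑ t : Fin m → X, f (Fin.cons a t) := by
  calc ∑ v : Fin (m + 1) → X, f v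
      = ∑ p : X × (Fin m → X), f (Fin.cons p.1 p.2) := by
        refine (Fintype.sum_equiv (Fin.consEquiv (fun _ => X)) _ _ (fun p => ?_)).symm
        rfl
    _ = ∑ a : X, ∑ t : Fin m → X, f (Fin.cons a t) := Fintype.sum_prod_type _

lemma Nop_comp_perm (w : GraphWeight G) (B : Set X) {k : ℕ}
    {ξ : (Fin (k + 2) → X) → ℝ} (hξ : IsGraphForm G (k + 1) ξ)
    (σ : Equiv.Perm (Fin (k + 1))) (v : Fin (k + 1) → X) :
    Nop w B ξ (v ∘ σ) = sgn σ * Nop w B ξ v := by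
  unfold Nop
  rw [w.symm σ v]
  have key : ∀ u : X,
      (if u ∉ B then (1:ℝ) else 0) * ξ (Fin.cons u (v ∘ σ)) * w.w (Fin.cons u (v ∘ σ))
        = sgn σ * ((if u ∉ B then (1:ℝ) else 0) * ξ (Fin.cons u v) * w.w (Fin.cons u v)) := by
    intro u
    have h1 : Fin.cons u (v ∘ σ) = (Fin.cons u v : Fin (k + 2) → X) ∘ consPerm σ :=
      (cons_comp_consPerm σ u v).symm
    have hsg : ((Equiv.Perm.sign (consPerm σ) : ℤ) : ℝ) = sgn σ := sgn_consPerm σ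
    rw [h1, hξ.2 (consPerm σ) (Fin.cons u v), hsg, w.symm (consPerm σ) (Fin.cons u v)]
    ring
  rw [Finset.sum_congr rfl (fun u _ => key u), ← Finset.mul_sum]
  ring

lemma formInner_symm (w : GraphWeight G) {k : ℕ} (α β : (Fin (k + 1) → X) → ℝ) :
    formInner w α β = formInner w β α := by
  unfold formInner
  congr 1
  apply Finset.sum_congr rfl
  intros
  ring

lemma innerBdry_symm (w : GraphWeight G) (B : Set X) {k : ℕ} (α β : (Fin (k + 1) → X) → ℝ) :
    innerBdry w B α β = innerBdry w B β α := by
  unfold innerBdry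
  congr 1
  apply Finset.sum_congr rfl
  intros
  ring

/-- `formInner` as a bilinear map. -/
noncomputable def FI (w : GraphWeight G) (k : ℕ) :
    ((Fin (k + 1) → X) → ℝ) →ₗ[ℝ] ((Fin (k + 1) → X) → ℝ) →ₗ[ℝ] ℝ :=
  LinearMap.mk₂ ℝ (formInner w)
    (fun α α' β => by
      unfold formInner
      have h : ∀ v : Fin (k + 1) → X,
          (α + α') v * β v * w.w v = α v * β v * w.w v + α' v * β v * w.w v := by
        intro v; simp only [Pi.add_apply]; ring
      rw [Finset.sum_congr rfl (fun v _ => h v), Finset.sum_add_distrib, mul_add])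
    (fun c α β => by
      unfold formInner
      have h : ∀ v : Fin (k + 1) → X,
          (c • α) v * β v * w.w v = c * (α v * β v * w.w v) := by
        intro v; simp only [Pi.smul_apply, smul_eq_mul]; ring
      rw [Finset.sum_congr rfl (fun v _ => h v), ← Finset.mul_sum, smul_eq_mul]
      ring)
    (fun α β β' => by
      unfold formInner
      have h : ∀ v : Fin (k + 1) → X,
          α v * (β + β') v * w.w v = α v * β v * w.w v + α v * β' v * w.w v := by
        intro v; simp only [Pi.add_apply]; ring
      rw [Finset.sum_congr rfl (fun v _ => h v), Finset.sum_add_distrib, mul_add])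
    (fun c α β => by
      unfold formInner
      have h : ∀ v : Fin (k + 1) → X,
          α v * (c • β) v * w.w v = c * (α v * β v * w.w v) := by
        intro v; simp only [Pi.smul_apply, smul_eq_mul]; ring
      rw [Finset.sum_congr rfl (fun v _ => h v), ← Finset.mul_sum, smul_eq_mul]
      ring)

lemma FI_apply (w : GraphWeight G) {k : ℕ} (α β : (Fin (k + 1) → X) → ℝ) :
    FI w k α β = formInner w α β := rfl

/-- `innerBdry` as a bilinear map. -/
noncomputable def IB (w : GraphWeight G) (B : Set X) (k : ℕ) :
    ((Fin (k + 1) → X) → ℝ) →ₗ[ℝ] ((Fin (k + 1) → X) → ℝ) →ₗ[ℝ] ℝ :=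
  LinearMap.mk₂ ℝ (innerBdry w B)
    (fun α α' β => by
      unfold innerBdry
      have h : ∀ v : Fin (k + 1) → X,
          (if v 0 ∈ B ∧ ∀ i : Fin k, v i.succ ∉ B then (1:ℝ) else 0) * ((α + α') v * β v * w.w v)
            = (if v 0 ∈ B ∧ ∀ i : Fin k, v i.succ ∉ B then (1:ℝ) else 0) * (α v * β v * w.w v)
              + (if v 0 ∈ B ∧ ∀ i : Fin k, v i.succ ∉ B then (1:ℝ) else 0) * (α' v * β v * w.w v) := by
        intro v; simp only [Pi.add_apply]; ring
      rw [Finset.sum_congr rfl (fun v _ => h v), Finset.sum_add_distrib, mul_add])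
    (fun c α β => by
      unfold innerBdry
      have h : ∀ v : Fin (k + 1) → X,
          (if v 0 ∈ B ∧ ∀ i : Fin k, v i.succ ∉ B then (1:ℝ) else 0) * ((c • α) v * β v * w.w v)
            = c * ((if v 0 ∈ B ∧ ∀ i : Fin k, v i.succ ∉ B then (1:ℝ) else 0) * (α v * β v * w.w v)) := by
        intro v; simp only [Pi.smul_apply, smul_eq_mul]; ring
      rw [Finset.sum_congr rfl (fun v _ => h v), ← Finset.mul_sum, smul_eq_mul]
      ring)
    (fun α β β' => by
      unfold innerBdry
      have h : ∀ v : Fin (k + 1) → X,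
          (if v 0 ∈ B ∧ ∀ i : Fin k, v i.succ ∉ B then (1:ℝ) else 0) * (α v * (β + β') v * w.w v)
            = (if v 0 ∈ B ∧ ∀ i : Fin k, v i.succ ∉ B then (1:ℝ) else 0) * (α v * β v * w.w v)
              + (if v 0 ∈ B ∧ ∀ i : Fin k, v i.succ ∉ B then (1:ℝ) else 0) * (α v * β' v * w.w v) := by
        intro v; simp only [Pi.add_apply]; ring
      rw [Finset.sum_congr rfl (fun v _ => h v), Finset.sum_add_distrib, mul_add])
    (fun c α β => by
      unfold innerBdry
      have h : ∀ v : Fin (k + 1) → X,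
          (if v 0 ∈ B ∧ ∀ i : Fin k, v i.succ ∉ B then (1:ℝ) else 0) * (α v * (c • β) v * w.w v)
            = c * ((if v 0 ∈ B ∧ ∀ i : Fin k, v i.succ ∉ B then (1:ℝ) else 0) * (α v * β v * w.w v)) := by
        intro v; simp only [Pi.smul_apply, smul_eq_mul]; ring
      rw [Finset.sum_congr rfl (fun v _ => h v), ← Finset.mul_sum, smul_eq_mul]
      ring)

lemma IB_apply (w : GraphWeight G) (B : Set X) {k : ℕ} (α β : (Fin (k + 1) → X) → ℝ) :
    IB w B k α β = innerBdry w B α β := rfl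

lemma innerBdry_congr_left (w : GraphWeight G) (B : Set X) {k : ℕ}
    {α α' β : (Fin (k + 1) → X) → ℝ}
    (h : ∀ v : Fin (k + 1) → X, v 0 ∈ B → (∀ i : Fin k, v i.succ ∉ B) → w.w v ≠ 0 →
      α v = α' v) :
    innerBdry w B α β = innerBdry w B α' β := by
  unfold innerBdry
  congr 1
  apply Finset.sum_congr rfl
  intro v _
  by_cases h1 : v 0 ∈ B ∧ ∀ i : Fin k, v i.succ ∉ B
  · by_cases h2 : w.w v = 0
    · rw [h2]; ring
    · rw [h v h1.1 h1.2 h2]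
  · rw [if_neg h1]; ring

lemma innerBdry_congr_right (w : GraphWeight G) (B : Set X) {k : ℕ}
    {α β β' : (Fin (k + 1) → X) → ℝ}
    (h : ∀ v : Fin (k + 1) → X, v 0 ∈ B → (∀ i : Fin k, v i.succ ∉ B) → w.w v ≠ 0 →
      β v = β' v) :
    innerBdry w B α β = innerBdry w B α β' := by
  rw [innerBdry_symm, innerBdry_congr_left w B h, innerBdry_symm]

lemma innerBdry_zero_right (w : GraphWeight G) (B : Set X) {k : ℕ}
    (α : (Fin (k + 1) → X) → ℝ) : innerBdry w B α 0 = 0 := by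
  unfold innerBdry
  simp

lemma innerBdry_self_nonneg (w : GraphWeight G) (B : Set X) {k : ℕ}
    (α : (Fin (k + 1) → X) → ℝ) : 0 ≤ innerBdry w B α α := by
  unfold innerBdry
  apply mul_nonneg (by positivity)
  apply Finset.sum_nonneg
  intro v _
  apply mul_nonneg
  · split <;> norm_num
  · exact mul_nonneg (mul_self_nonneg (α v)) (w.nonneg v)

lemma innerBdry_self_eq_zero_imp (w : GraphWeight G) (B : Set X) {k : ℕ}
    {α : (Fin (k + 1) → X) → ℝ} (h : innerBdry w B α α = 0) :
    ∀ v : Fin (k + 1) → X, v 0 ∈ B → (∀ i : Fin k, v i.succ ∉ B) → w.w v ≠ 0 → α v = 0 := by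
  intro v hv0 hvi hw
  unfold innerBdry at h
  have hfac : ((k.factorial : ℝ))⁻¹ ≠ 0 := by positivity
  have hsum : ∑ u : Fin (k + 1) → X,
      (if u 0 ∈ B ∧ ∀ i : Fin k, u i.succ ∉ B then (1:ℝ) else 0) * (α u * α u * w.w u) = 0 :=
    (mul_eq_zero.1 h).resolve_left hfac
  have hnn : ∀ u ∈ Finset.univ, (0:ℝ) ≤
      (if u 0 ∈ B ∧ ∀ i : Fin k, u i.succ ∉ B then (1:ℝ) else 0) * (α u * α u * w.w u) := by
    intro u _
    apply mul_nonneg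
    · split <;> norm_num
    · exact mul_nonneg (mul_self_nonneg (α u)) (w.nonneg u)
  have hterm := (Finset.sum_eq_zero_iff_of_nonneg hnn).1 hsum v (Finset.mem_univ v)
  rw [if_pos ⟨hv0, hvi⟩, one_mul] at hterm
  rcases mul_eq_zero.1 hterm with h1 | h2
  · exact mul_self_eq_zero.1 h1
  · exact absurd h2 hw

lemma formInner_self_nonneg (w : GraphWeight G) {k : ℕ} (α : (Fin (k + 1) → X) → ℝ) :
    0 ≤ formInner w α α := by
  unfold formInner
  apply mul_nonneg (by positivity)
  apply Finset.sum_nonneg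
  intro v _
  exact mul_nonneg (mul_self_nonneg (α v)) (w.nonneg v)

lemma eq_zero_of_formInner_self_eq_zero (w : GraphWeight G) {k : ℕ}
    {α : (Fin (k + 1) → X) → ℝ} (hα : ∀ v, ¬ IsTupleClique G v → α v = 0)
    (h : formInner w α α = 0) : α = 0 := by
  funext v
  simp only [Pi.zero_apply]
  by_cases hc : IsTupleClique G v
  · unfold formInner at h
    have hfac : (((k + 1).factorial : ℝ))⁻¹ ≠ 0 := by positivity
    have hsum : ∑ u : Fin (k + 1) → X, α u * α u * w.w u = 0 :=
      (mul_eq_zero.1 h).resolve_left hfac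
    have hnn : ∀ u ∈ Finset.univ, (0:ℝ) ≤ α u * α u * w.w u := fun u _ =>
      mul_nonneg (mul_self_nonneg (α u)) (w.nonneg u)
    have hterm := (Finset.sum_eq_zero_iff_of_nonneg hnn).1 hsum v (Finset.mem_univ v)
    rcases mul_eq_zero.1 hterm with h1 | h2
    · exact mul_self_eq_zero.1 h1
    · exact absurd h2 (w.pos v hc).ne'
  · exact hα v hc

lemma formInner_self_pos (w : GraphWeight G) {k : ℕ}
    {α : (Fin (k + 1) → X) → ℝ} (hα : ∀ v, ¬ IsTupleClique G v → α v = 0)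
    (hne : α ≠ 0) : 0 < formInner w α α :=
  (formInner_self_nonneg w α).lt_of_ne
    (fun h => hne (eq_zero_of_formInner_self_eq_zero w hα h.symm))

end Aux2

section Green

variable {G : SimpleGraph X} [Fintype X]

/-- **Green's formula** for graph forms: if `ξ` is a graph `(k+1)`-form that is coclosed
in the interior, and `η` is any graph `k`-form, then `⟪dη, ξ⟫ = ⟪η, 𝐍ξ⟫_∂`. -/
lemma green {B : Set X} (hB : IsBoundary G B) (w : GraphWeight G) {k : ℕ}
    {η : (Fin (k + 1) → X) → ℝ} {ξ : (Fin (k + 2) → X) → ℝ}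
    (hη : IsGraphForm G k η) (hξ : IsGraphForm G (k + 1) ξ)
    (hδ : ∀ v : Fin (k + 1) → X, (∀ i, v i ∉ B) → gdelta w ξ v = 0) :
    formInner w (gd G η) ξ = innerBdry w B η (Nop w B ξ) := by
  -- abbreviations
  set R : ℝ := ∑ s : Fin (k + 1) → X,
    (if s 0 ∈ B ∧ ∀ i : Fin k, s i.succ ∉ B then (1:ℝ) else 0) *
      (η s * Nop w B ξ s * w.w s) with hR
  -- Step 2: pointwise expansion of `gd`
  have step2 : ∀ v : Fin (k + 2) → X, gd G η v * ξ v * w.w v =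
      ∑ j : Fin (k + 2), (-1:ℝ) ^ (j : ℕ) * η (v ∘ Fin.succAbove j) * ξ v * w.w v := by
    intro v
    by_cases hc : IsTupleClique G v
    · rw [gd, cliqueInd, if_pos hc, one_mul, Finset.sum_mul, Finset.sum_mul]
    · rw [hξ.1 v hc]
      simp
  -- Step 4: each `j`-term equals the `Fin.succ`-term
  have step4 : ∀ j : Fin (k + 2),
      (∑ v : Fin (k + 2) → X, (-1:ℝ) ^ (j : ℕ) * η (v ∘ Fin.succAbove j) * ξ v * w.w v) =
        ∑ u : Fin (k + 2) → X, η (u ∘ Fin.succ) * ξ u * w.w u := by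
    intro j
    rw [← sum_comp_perm (Fin.cycleRange j)
      (fun v => (-1:ℝ) ^ (j : ℕ) * η (v ∘ Fin.succAbove j) * ξ v * w.w v)]
    apply Finset.sum_congr rfl
    intro u _
    have h1 : (u ∘ ⇑(Fin.cycleRange j)) ∘ Fin.succAbove j = u ∘ Fin.succ := by
      funext i
      simp only [Function.comp_apply, Fin.cycleRange_succAbove]
    have h2 : ξ (u ∘ ⇑(Fin.cycleRange j)) = (-1:ℝ) ^ (j : ℕ) * ξ u := by
      rw [hξ.2 (Fin.cycleRange j) u]
      have hsg : ((Equiv.Perm.sign (Fin.cycleRange j) : ℤ) : ℝ) = (-1:ℝ) ^ (j : ℕ) :=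
        sgn_cycleRange j
      rw [hsg]
    show (-1:ℝ) ^ (j : ℕ) * η ((u ∘ ⇑(Fin.cycleRange j)) ∘ Fin.succAbove j) *
        ξ (u ∘ ⇑(Fin.cycleRange j)) * w.w (u ∘ ⇑(Fin.cycleRange j)) =
      η (u ∘ Fin.succ) * ξ u * w.w u
    rw [h1, h2, w.symm (Fin.cycleRange j) u]
    linear_combination (η (u ∘ Fin.succ) * ξ u * w.w u) * neg_one_pow_sq (j : ℕ)
  -- Claim A: pointwise analysis of the interior sum
  have claimA : ∀ t : Fin (k + 1) → X,
      (∑ a : X, η t * ξ (Fin.cons a t) * w.w (Fin.cons a t)) =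
        ∑ p : Fin (k + 1), (if t p ∈ B ∧ ∀ q, q ≠ p → t q ∉ B then (1:ℝ) else 0) *
          (η t * Nop w B ξ t * w.w t) := by
    intro t
    by_cases hηt : η t = 0
    · simp [hηt]
    · have hc : IsTupleClique G t := by
        by_contra hcc
        exact hηt (hη.1 t hcc)
      have hw : w.w t ≠ 0 := (w.pos t hc).ne'
      by_cases hbd : ∃ p, t p ∈ B
      · obtain ⟨p0, hp0⟩ := hbd
        have huniq : ∀ q, q ≠ p0 → t q ∉ B := by
          intro q hq hqB
          exact hB.1 _ hqB _ hp0 (hc q p0 hq)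
        have hrhs : (∑ p : Fin (k + 1),
            (if t p ∈ B ∧ ∀ q, q ≠ p → t q ∉ B then (1:ℝ) else 0) *
              (η t * Nop w B ξ t * w.w t)) = η t * Nop w B ξ t * w.w t := by
          rw [Finset.sum_eq_single p0]
          · rw [if_pos ⟨hp0, huniq⟩, one_mul]
          · intro p _ hp
            rw [if_neg, zero_mul]
            intro hcon
            exact huniq p hp hcon.1
          · intro hmem
            exact absurd (Finset.mem_univ p0) hmem
        rw [hrhs]
        have hlhs : ∀ a : X, η t * ξ (Fin.cons a t) * w.w (Fin.cons a t) =
            η t * ((if a ∉ B then (1:ℝ) else 0) * ξ (Fin.cons a t) * w.w (Fin.cons a t)) := by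
          intro a
          by_cases haB : a ∉ B
          · rw [if_pos haB]; ring
          · rw [if_neg haB]
            have haB' : a ∈ B := not_not.1 haB
            have hnc : ¬ IsTupleClique G (Fin.cons a t) := by
              intro hcl
              have hadj := hcl 0 p0.succ (Fin.succ_ne_zero p0).symm
              rw [Fin.cons_zero, Fin.cons_succ] at hadj
              exact hB.1 a haB' (t p0) hp0 hadj
            rw [hξ.1 _ hnc]
            ring
        rw [Finset.sum_congr rfl (fun a _ => hlhs a), ← Finset.mul_sum]
        have hnop : (∑ a : X, (if a ∉ B then (1:ℝ) else 0) * ξ (Fin.cons a t) *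
            w.w (Fin.cons a t)) = w.w t * Nop w B ξ t := by
          unfold Nop
          rw [← mul_assoc, mul_inv_cancel₀ hw, one_mul]
        rw [hnop]
        ring
      · push_neg at hbd
        have hrhs : (∑ p : Fin (k + 1),
            (if t p ∈ B ∧ ∀ q, q ≠ p → t q ∉ B then (1:ℝ) else 0) *
              (η t * Nop w B ξ t * w.w t)) = 0 := by
          apply Finset.sum_eq_zero
          intro p _
          rw [if_neg, zero_mul]
          intro hcon
          exact hbd p hcon.1
        have hfac2 : ∀ a : X, η t * ξ (Fin.cons a t) * w.w (Fin.cons a t) =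
            η t * (ξ (Fin.cons a t) * w.w (Fin.cons a t)) := fun a => by ring
        rw [hrhs, Finset.sum_congr rfl (fun a _ => hfac2 a), ← Finset.mul_sum]
        have hdel : (∑ a : X, ξ (Fin.cons a t) * w.w (Fin.cons a t)) =
            w.w t * gdelta w ξ t := by
          unfold gdelta
          rw [← mul_assoc, mul_inv_cancel₀ hw, one_mul]
        rw [hdel, hδ t hbd]
        ring
  -- Claim B: reindexing the one-boundary-vertex sum
  have claimB : ∀ p : Fin (k + 1),
      (∑ t : Fin (k + 1) → X, (if t p ∈ B ∧ ∀ q, q ≠ p → t q ∉ B then (1:ℝ) else 0) *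
        (η t * Nop w B ξ t * w.w t)) = R := by
    intro p
    rw [← sum_comp_perm (Fin.cycleRange p)
      (fun t => (if t p ∈ B ∧ ∀ q, q ≠ p → t q ∉ B then (1:ℝ) else 0) *
        (η t * Nop w B ξ t * w.w t)), hR]
    apply Finset.sum_congr rfl
    intro s _
    have hρp : (s ∘ ⇑(Fin.cycleRange p)) p = s 0 := by
      simp only [Function.comp_apply, Fin.cycleRange_self]
    have hiff : ((s ∘ ⇑(Fin.cycleRange p)) p ∈ B ∧
        ∀ q, q ≠ p → (s ∘ ⇑(Fin.cycleRange p)) q ∉ B) ↔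
        (s 0 ∈ B ∧ ∀ i : Fin k, s i.succ ∉ B) := by
      rw [hρp]
      constructor
      · rintro ⟨h0, h1⟩
        refine ⟨h0, fun i => ?_⟩
        have hq : (Fin.cycleRange p).symm i.succ ≠ p := by
          intro hcon
          have := congrArg (Fin.cycleRange p) hcon
          rw [Equiv.apply_symm_apply, Fin.cycleRange_self] at this
          exact (Fin.succ_ne_zero i) this
        have := h1 _ hq
        rwa [Function.comp_apply, Equiv.apply_symm_apply] at this
      · rintro ⟨h0, h1⟩
        refine ⟨h0, fun q hq => ?_⟩
        have hne : Fin.cycleRange p q ≠ 0 := by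
          intro hcon
          apply hq
          apply (Fin.cycleRange p).injective
          rw [hcon, Fin.cycleRange_self]
        simp only [Function.comp_apply]
        rcases Fin.eq_succ_of_ne_zero hne with ⟨i, hi⟩
        rw [hi]
        exact h1 i
    have hη2 : η (s ∘ ⇑(Fin.cycleRange p)) = (-1:ℝ) ^ (p : ℕ) * η s := by
      rw [hη.2 (Fin.cycleRange p) s]
      have hsg : ((Equiv.Perm.sign (Fin.cycleRange p) : ℤ) : ℝ) = (-1:ℝ) ^ (p : ℕ) :=
        sgn_cycleRange p
      rw [hsg]
    have hN2 : Nop w B ξ (s ∘ ⇑(Fin.cycleRange p)) = (-1:ℝ) ^ (p : ℕ) * Nop w B ξ s := by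
      rw [Nop_comp_perm w B hξ (Fin.cycleRange p) s]
      have hsg : sgn (Fin.cycleRange p) = (-1:ℝ) ^ (p : ℕ) := sgn_cycleRange p
      rw [hsg]
    show (if (s ∘ ⇑(Fin.cycleRange p)) p ∈ B ∧
        ∀ q, q ≠ p → (s ∘ ⇑(Fin.cycleRange p)) q ∉ B then (1:ℝ) else 0) *
        (η (s ∘ ⇑(Fin.cycleRange p)) * Nop w B ξ (s ∘ ⇑(Fin.cycleRange p)) *
          w.w (s ∘ ⇑(Fin.cycleRange p))) =
      (if s 0 ∈ B ∧ ∀ i : Fin k, s i.succ ∉ B then (1:ℝ) else 0) *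
        (η s * Nop w B ξ s * w.w s)
    rw [if_congr hiff rfl rfl, hη2, hN2, w.symm (Fin.cycleRange p) s]
    have := neg_one_pow_sq (p : ℕ)
    set c := (if s 0 ∈ B ∧ ∀ i : Fin k, s i.succ ∉ B then (1:ℝ) else 0)
    linear_combination (c * η s * Nop w B ξ s * w.w s) * this
  -- Assemble
  have hsum1 : (∑ v : Fin (k + 2) → X, gd G η v * ξ v * w.w v) =
      (k + 2 : ℝ) * ∑ u : Fin (k + 2) → X, η (u ∘ Fin.succ) * ξ u * w.w u := by
    rw [Finset.sum_congr rfl (fun v _ => step2 v), Finset.sum_comm,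
      Finset.sum_congr rfl (fun j _ => step4 j), Finset.sum_const]
    simp only [Finset.card_univ, Fintype.card_fin, nsmul_eq_mul]
    push_cast
    ring
  have hT : (∑ u : Fin (k + 2) → X, η (u ∘ Fin.succ) * ξ u * w.w u) = (k + 1 : ℝ) * R := by
    rw [sum_cons_decomp (fun u => η (u ∘ Fin.succ) * ξ u * w.w u)]
    have hcons : ∀ (a : X) (t : Fin (k + 1) → X),
        η ((Fin.cons a t : Fin (k + 2) → X) ∘ Fin.succ) * ξ (Fin.cons a t) * w.w (Fin.cons a t)
          = η t * ξ (Fin.cons a t) * w.w (Fin.cons a t) := by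
      intro a t
      have : (Fin.cons a t : Fin (k + 2) → X) ∘ Fin.succ = t := by
        funext i
        simp [Fin.cons_succ]
      rw [this]
    rw [Finset.sum_congr rfl (fun a _ => Finset.sum_congr rfl (fun t _ => hcons a t)),
      Finset.sum_comm, Finset.sum_congr rfl (fun t _ => claimA t), Finset.sum_comm,
      Finset.sum_congr rfl (fun p _ => claimB p), Finset.sum_const]
    simp only [Finset.card_univ, Fintype.card_fin, nsmul_eq_mul]
    push_cast
    ring
  show (((k + 1 + 1).factorial : ℝ))⁻¹ * (∑ v : Fin (k + 2) → X, gd G η v * ξ v * w.w v) =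
    ((k.factorial : ℝ))⁻¹ * ∑ s : Fin (k + 1) → X,
      (if s 0 ∈ B ∧ ∀ i : Fin k, s i.succ ∉ B then (1:ℝ) else 0) *
        (η s * Nop w B ξ s * w.w s)
  rw [hsum1, hT, ← hR]
  have hfac : (((k + 1 + 1).factorial : ℝ)) = (k + 2 : ℝ) * ((k + 1 : ℝ) * (k.factorial : ℝ)) := by
    rw [Nat.factorial_succ, Nat.factorial_succ]
    push_cast
    ring
  rw [hfac]
  have h1 : (k + 2 : ℝ) ≠ 0 := by positivity
  have h2 : (k + 1 : ℝ) ≠ 0 := by positivity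
  have h3 : (k.factorial : ℝ) ≠ 0 := by positivity
  field_simp

end Green

section Aux4

variable {G : SimpleGraph X}

lemma IsGraphForm.zero {k : ℕ} : IsGraphForm G k (0 : (Fin (k + 1) → X) → ℝ) :=
  ⟨fun _ _ => rfl, fun σ v => by simp⟩

lemma IsGraphForm.add {k : ℕ} {α β : (Fin (k + 1) → X) → ℝ}
    (hα : IsGraphForm G k α) (hβ : IsGraphForm G k β) : IsGraphForm G k (α + β) := by
  constructor
  · intro v hv
    simp only [Pi.add_apply, hα.1 v hv, hβ.1 v hv, add_zero]
  · intro σ v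
    simp only [Pi.add_apply, hα.2 σ v, hβ.2 σ v]
    ring

lemma IsGraphForm.smul {k : ℕ} {α : (Fin (k + 1) → X) → ℝ} (c : ℝ)
    (hα : IsGraphForm G k α) : IsGraphForm G k (c • α) := by
  constructor
  · intro v hv
    simp only [Pi.smul_apply, hα.1 v hv, smul_zero]
  · intro σ v
    simp only [Pi.smul_apply, hα.2 σ v, smul_eq_mul]
    ring

lemma isGraphForm_sum {k : ℕ} {ι : Type*} (s : Finset ι) (f : ι → ((Fin (k + 1) → X) → ℝ))
    (h : ∀ i ∈ s, IsGraphForm G k (f i)) : IsGraphForm G k (∑ i ∈ s, f i) :=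
  Finset.sum_induction f (IsGraphForm G k) (fun _ _ ha hb => ha.add hb) IsGraphForm.zero h

/-- The exterior differential as a linear map. -/
noncomputable def gdL (G : SimpleGraph X) (k : ℕ) :
    ((Fin (k + 1) → X) → ℝ) →ₗ[ℝ] ((Fin (k + 2) → X) → ℝ) where
  toFun := gd G
  map_add' α β := by
    funext v
    show gd G (α + β) v = gd G α v + gd G β v
    unfold gd
    have h : ∀ j : Fin (k + 2), (-1:ℝ) ^ (j : ℕ) * (α + β) (v ∘ Fin.succAbove j) =
        (-1:ℝ) ^ (j : ℕ) * α (v ∘ Fin.succAbove j) + (-1:ℝ) ^ (j : ℕ) * β (v ∘ Fin.succAbove j) := by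
      intro j
      simp only [Pi.add_apply]
      ring
    rw [Finset.sum_congr rfl (fun j _ => h j), Finset.sum_add_distrib, mul_add]
  map_smul' c α := by
    funext v
    show gd G (c • α) v = c * gd G α v
    unfold gd
    have h : ∀ j : Fin (k + 2), (-1:ℝ) ^ (j : ℕ) * (c • α) (v ∘ Fin.succAbove j) =
        c * ((-1:ℝ) ^ (j : ℕ) * α (v ∘ Fin.succAbove j)) := by
      intro j
      simp only [Pi.smul_apply, smul_eq_mul]
      ring
    rw [Finset.sum_congr rfl (fun j _ => h j), ← Finset.mul_sum]
    ring

lemma gdL_apply {k : ℕ} (α : (Fin (k + 1) → X) → ℝ) : gdL G k α = gd G α := rfl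

lemma IsBdryForm.zero {B : Set X} {k : ℕ} : IsBdryForm G B k (0 : (Fin (k + 1) → X) → ℝ) :=
  ⟨fun _ _ => rfl, fun σ v => by simp⟩

lemma IsBdryForm.add {B : Set X} {k : ℕ} {α β : (Fin (k + 1) → X) → ℝ}
    (hα : IsBdryForm G B k α) (hβ : IsBdryForm G B k β) : IsBdryForm G B k (α + β) := by
  constructor
  · intro v hv
    simp only [Pi.add_apply, hα.1 v hv, hβ.1 v hv, add_zero]
  · intro σ v
    simp only [Pi.add_apply, hα.2 σ v, hβ.2 σ v]
    ring

lemma IsBdryForm.smul {B : Set X} {k : ℕ} {α : (Fin (k + 1) → X) → ℝ}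
    (hα : IsBdryForm G B k α) (c : ℝ) : IsBdryForm G B k (c • α) := by
  constructor
  · intro v hv
    simp only [Pi.smul_apply, hα.1 v hv, smul_zero]
  · intro σ v
    simp only [Pi.smul_apply, hα.2 σ v, smul_eq_mul]
    ring

lemma IsBdryForm.neg {B : Set X} {k : ℕ} {α : (Fin (k + 1) → X) → ℝ}
    (hα : IsBdryForm G B k α) : IsBdryForm G B k (-α) := by
  have := hα.smul (-1)
  simpa using this

lemma IsBdryForm.sub {B : Set X} {k : ℕ} {α β : (Fin (k + 1) → X) → ℝ}
    (hα : IsBdryForm G B k α) (hβ : IsBdryForm G B k β) : IsBdryForm G B k (α - β) := by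
  have := hα.add hβ.neg
  simpa [sub_eq_add_neg] using this

lemma isBdryForm_sum {B : Set X} {k : ℕ} {ι : Type*} (s : Finset ι)
    (f : ι → ((Fin (k + 1) → X) → ℝ)) (h : ∀ i ∈ s, IsBdryForm G B k (f i)) :
    IsBdryForm G B k (∑ i ∈ s, f i) :=
  Finset.sum_induction f (IsBdryForm G B k) (fun _ _ ha hb => ha.add hb) IsBdryForm.zero h

lemma isBdryTuple_comp_consPerm {B : Set X} {k : ℕ} (σ : Equiv.Perm (Fin k))
    (v : Fin (k + 1) → X) : IsBdryTuple G B (v ∘ consPerm σ) ↔ IsBdryTuple G B v := by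
  unfold IsBdryTuple
  rw [isTupleClique_comp]
  have h0 : (v ∘ consPerm σ) 0 = v 0 := by
    simp only [Function.comp_apply, consPerm_zero]
  have hs : ∀ i : Fin k, (v ∘ consPerm σ) i.succ = v (σ i).succ := by
    intro i
    simp only [Function.comp_apply, consPerm_succ]
  rw [h0]
  constructor
  · rintro ⟨hc, hb0, hbi⟩
    refine ⟨hc, hb0, fun i => ?_⟩
    have := hbi (σ.symm i)
    rwa [hs (σ.symm i), Equiv.apply_symm_apply] at this
  · rintro ⟨hc, hb0, hbi⟩
    refine ⟨hc, hb0, fun i => ?_⟩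
    rw [hs i]
    exact hbi (σ i)

lemma isBdryForm_trunc {B : Set X} {k : ℕ} {η : (Fin (k + 1) → X) → ℝ}
    (hη : IsGraphForm G k η) :
    IsBdryForm G B k (fun v => if IsBdryTuple G B v then η v else 0) := by
  constructor
  · intro v hv
    exact if_neg hv
  · intro σ v
    have hveq : (Fin.cons (v 0) (fun i => v (σ i).succ) : Fin (k + 1) → X) = v ∘ consPerm σ :=
      (comp_consPerm σ v).symm
    rw [hveq]
    show (if IsBdryTuple G B (v ∘ consPerm σ) then η (v ∘ consPerm σ) else 0) =
      ((Equiv.Perm.sign σ : ℤ) : ℝ) * (if IsBdryTuple G B v then η v else 0)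
    by_cases hv : IsBdryTuple G B v
    · rw [if_pos ((isBdryTuple_comp_consPerm σ v).2 hv), if_pos hv, hη.2 (consPerm σ) v]
      have hsg : ((Equiv.Perm.sign (consPerm σ) : ℤ) : ℝ) = sgn σ := sgn_consPerm σ
      rw [hsg]
      rfl
    · rw [if_neg (fun h => hv ((isBdryTuple_comp_consPerm σ v).1 h)), if_neg hv, mul_zero]

end Aux4

section Aux5

variable {G : SimpleGraph X} [Fintype X]

lemma formInner_sum_left (w : GraphWeight G) {k : ℕ} {ι : Type*} (s : Finset ι)
    (d : ι → ℝ) (f : ι → ((Fin (k + 1) → X) → ℝ)) (β : (Fin (k + 1) → X) → ℝ) :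
    formInner w (∑ l ∈ s, d l • f l) β = ∑ l ∈ s, d l * formInner w (f l) β := by
  calc formInner w (∑ l ∈ s, d l • f l) β = (FI w k (∑ l ∈ s, d l • f l)) β := rfl
    _ = (∑ l ∈ s, FI w k (d l • f l)) β := by rw [map_sum]
    _ = ∑ l ∈ s, (FI w k (d l • f l)) β := LinearMap.sum_apply _ _ _
    _ = ∑ l ∈ s, d l * formInner w (f l) β := by
        apply Finset.sum_congr rfl
        intro l _
        rw [map_smul, LinearMap.smul_apply, smul_eq_mul, FI_apply]

lemma formInner_sum_right (w : GraphWeight G) {k : ℕ} {ι : Type*} (s : Finset ι)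
    (d : ι → ℝ) (f : ι → ((Fin (k + 1) → X) → ℝ)) (α : (Fin (k + 1) → X) → ℝ) :
    formInner w α (∑ l ∈ s, d l • f l) = ∑ l ∈ s, d l * formInner w α (f l) := by
  calc formInner w α (∑ l ∈ s, d l • f l) = (FI w k α) (∑ l ∈ s, d l • f l) := rfl
    _ = ∑ l ∈ s, (FI w k α) (d l • f l) := map_sum _ _ _
    _ = ∑ l ∈ s, d l * formInner w α (f l) := by
        apply Finset.sum_congr rfl
        intro l _
        rw [map_smul, smul_eq_mul, FI_apply]

lemma innerBdry_sum_left (w : GraphWeight G) (B : Set X) {k : ℕ} {ι : Type*} (s : Finset ι)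
    (d : ι → ℝ) (f : ι → ((Fin (k + 1) → X) → ℝ)) (β : (Fin (k + 1) → X) → ℝ) :
    innerBdry w B (∑ l ∈ s, d l • f l) β = ∑ l ∈ s, d l * innerBdry w B (f l) β := by
  calc innerBdry w B (∑ l ∈ s, d l • f l) β = (IB w B k (∑ l ∈ s, d l • f l)) β := rfl
    _ = (∑ l ∈ s, IB w B k (d l • f l)) β := by rw [map_sum]
    _ = ∑ l ∈ s, (IB w B k (d l • f l)) β := LinearMap.sum_apply _ _ _
    _ = ∑ l ∈ s, d l * innerBdry w B (f l) β := by
        apply Finset.sum_congr rfl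
        intro l _
        rw [map_smul, LinearMap.smul_apply, smul_eq_mul, IB_apply]

lemma innerBdry_sum_right (w : GraphWeight G) (B : Set X) {k : ℕ} {ι : Type*} (s : Finset ι)
    (d : ι → ℝ) (f : ι → ((Fin (k + 1) → X) → ℝ)) (α : (Fin (k + 1) → X) → ℝ) :
    innerBdry w B α (∑ l ∈ s, d l • f l) = ∑ l ∈ s, d l * innerBdry w B α (f l) := by
  calc innerBdry w B α (∑ l ∈ s, d l • f l) = (IB w B k α) (∑ l ∈ s, d l • f l) := rfl
    _ = ∑ l ∈ s, (IB w B k α) (d l • f l) := map_sum _ _ _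
    _ = ∑ l ∈ s, d l * innerBdry w B α (f l) := by
        apply Finset.sum_congr rfl
        intro l _
        rw [map_smul, smul_eq_mul, IB_apply]

lemma innerBdry_add_left (w : GraphWeight G) (B : Set X) {k : ℕ}
    (α α' β : (Fin (k + 1) → X) → ℝ) :
    innerBdry w B (α + α') β = innerBdry w B α β + innerBdry w B α' β := by
  rw [← IB_apply, map_add, LinearMap.add_apply, IB_apply, IB_apply]

lemma innerBdry_sub_left (w : GraphWeight G) (B : Set X) {k : ℕ}
    (α α' β : (Fin (k + 1) → X) → ℝ) :
    innerBdry w B (α - α') β = innerBdry w B α β - innerBdry w B α' β := by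
  rw [← IB_apply, map_sub, LinearMap.sub_apply, IB_apply, IB_apply]

lemma innerBdry_sub_right (w : GraphWeight G) (B : Set X) {k : ℕ}
    (α β β' : (Fin (k + 1) → X) → ℝ) :
    innerBdry w B α (β - β') = innerBdry w B α β - innerBdry w B α β' := by
  rw [← IB_apply, map_sub, IB_apply, IB_apply]

end Aux5

/-- Raulot–Savo-type eigenvalue comparison. Let `S` be an
`n`-dimensional subspace of exact `(k+1)`-forms that are coclosed in the interior, and
let `A : S → S` be the operator with `⟨Aξ, η⟩_G = ⟨𝐍ξ, 𝐍η⟩_{∂Ω}`. Then `A` is positive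
definite and self-adjoint, and whenever `lam` lists the eigenvalues of `A` (ascending,
with orthonormal eigenvectors) and `mu` lists the positive eigenvalues of
`T^{(k)}_{δd}` (ascending, with an orthonormal family of eigenfunctions spanning the
orthogonal complement of the kernel), we have `n ≤ N` and `μ_i ≤ λ_i` for `i < n`. -/
theorem dtn_eigenvalue_comparison {X : Type*} [Fintype X] (G : SimpleGraph X)
    (B : Set X) (hB : IsBoundary G B) (w : GraphWeight G) (k n : ℕ)
    (S : Submodule ℝ ((Fin (k + 2) → X) → ℝ))
    (hS : ∀ ξ ∈ S, (∃ η, IsGraphForm G k η ∧ gd G η = ξ) ∧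
      ∀ v : Fin (k + 1) → X, (∀ i, v i ∉ B) → gdelta w ξ v = 0)
    (hdim : Module.finrank ℝ S = n)
    (A : S →ₗ[ℝ] S)
    (hA : ∀ ξ η : S, formInner w ((A ξ : (Fin (k + 2) → X) → ℝ)) (η : (Fin (k + 2) → X) → ℝ) =
      innerBdry w B (Nop w B (ξ : (Fin (k + 2) → X) → ℝ)) (Nop w B (η : (Fin (k + 2) → X) → ℝ))) :
    (∀ ξ : S, ξ ≠ 0 → 0 < formInner w ((A ξ : (Fin (k + 2) → X) → ℝ)) (ξ : (Fin (k + 2) → X) → ℝ)) ∧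
    (∀ ξ η : S, formInner w ((A ξ : (Fin (k + 2) → X) → ℝ)) (η : (Fin (k + 2) → X) → ℝ) =
      formInner w (ξ : (Fin (k + 2) → X) → ℝ) ((A η : (Fin (k + 2) → X) → ℝ))) ∧
    ∀ (lam : Fin n → ℝ) (e : Fin n → S),
      Monotone lam → (∀ i, A (e i) = lam i • e i) →
      (∀ i j, formInner w ((e i : (Fin (k + 2) → X) → ℝ)) ((e j : (Fin (k + 2) → X) → ℝ)) =
        if i = j then 1 else 0) →
      ∀ (N : ℕ) (mu : Fin N → ℝ) (φ : Fin N → ((Fin (k + 1) → X) → ℝ)),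
        Monotone mu → (∀ j, 0 < mu j) → (∀ j, IsBdryForm G B k (φ j)) →
        (∀ j l, innerBdry w B (φ j) (φ l) = if j = l then 1 else 0) →
        (∀ j, ∃ ω : (Fin (k + 1) → X) → ℝ, IsGraphForm G k ω ∧
          (∀ v : Fin (k + 1) → X, (∀ i, v i ∉ B) → gdelta w (gd G ω) v = 0) ∧
          (∀ v : Fin (k + 1) → X, IsBdryTuple G B v → ω v = φ j v) ∧
          (∀ v : Fin (k + 1) → X, IsBdryTuple G B v →
            Nop w B (gd G ω) v = mu j * φ j v)) →
        (∀ ψ : (Fin (k + 1) → X) → ℝ, IsBdryForm G B k ψ →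
          (∀ j, innerBdry w B ψ (φ j) = 0) →
          ∃ ω : (Fin (k + 1) → X) → ℝ, IsGraphForm G k ω ∧
            (∀ v : Fin (k + 1) → X, (∀ i, v i ∉ B) → gdelta w (gd G ω) v = 0) ∧
            (∀ v : Fin (k + 1) → X, IsBdryTuple G B v → ω v = ψ v) ∧
            (∀ v : Fin (k + 1) → X, IsBdryTuple G B v → Nop w B (gd G ω) v = 0)) →
        ∃ h : n ≤ N, ∀ i : Fin n, mu (Fin.castLE h i) ≤ lam i := by
  classical
  -- a linear choice of potentials
  set b : Module.Basis (Fin (Module.finrank ℝ S)) ℝ S := Module.finBasis ℝ S with hbdef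
  have hpot0 : ∀ ξ : S, ∃ η, IsGraphForm G k η ∧ gd G η = (ξ : (Fin (k + 2) → X) → ℝ) :=
    fun ξ => (hS ξ ξ.2).1
  let η₀ : Fin (Module.finrank ℝ S) → ((Fin (k + 1) → X) → ℝ) := fun i => (hpot0 (b i)).choose
  have hη₀gf : ∀ i, IsGraphForm G k (η₀ i) := fun i => (hpot0 (b i)).choose_spec.1
  have hη₀gd : ∀ i, gd G (η₀ i) = ((b i : S) : (Fin (k + 2) → X) → ℝ) :=
    fun i => (hpot0 (b i)).choose_spec.2
  let pot : S →ₗ[ℝ] ((Fin (k + 1) → X) → ℝ) := b.constr ℝ η₀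
  have hgd : ∀ ξ : S, gd G (pot ξ) = (ξ : (Fin (k + 2) → X) → ℝ) := by
    have hcomp : (gdL G k).comp pot = S.subtype := by
      apply b.ext
      intro i
      simp only [LinearMap.comp_apply, Submodule.subtype_apply]
      rw [show pot (b i) = η₀ i from b.constr_basis ℝ η₀ i]
      rw [gdL_apply, hη₀gd i]
    intro ξ
    have := LinearMap.congr_fun hcomp ξ
    simpa only [LinearMap.comp_apply, Submodule.subtype_apply, gdL_apply] using this
  have hpotgf : ∀ ξ : S, IsGraphForm G k (pot ξ) := by
    intro ξ
    have : pot ξ = ∑ i, b.equivFun ξ i • η₀ i := b.constr_apply_fintype ℝ η₀ ξ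
    rw [this]
    exact isGraphForm_sum _ _ (fun i _ => (hη₀gf i).smul _)
  have hξgf : ∀ ξ : S, IsGraphForm G (k + 1) (ξ : (Fin (k + 2) → X) → ℝ) := by
    intro ξ
    rw [← hgd ξ]
    exact gd_isGraphForm (hpotgf ξ)
  have hξδ : ∀ ξ : S, ∀ v : Fin (k + 1) → X, (∀ i, v i ∉ B) →
      gdelta w (ξ : (Fin (k + 2) → X) → ℝ) v = 0 := fun ξ => (hS ξ ξ.2).2
  have E1 : ∀ ξ : S, formInner w (ξ : (Fin (k + 2) → X) → ℝ) (ξ : (Fin (k + 2) → X) → ℝ) =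
      innerBdry w B (pot ξ) (Nop w B (ξ : (Fin (k + 2) → X) → ℝ)) := by
    intro ξ
    nth_rewrite 1 [← hgd ξ]
    exact green hB w (hpotgf ξ) (hξgf ξ) (hξδ ξ)
  have hcoene : ∀ ξ : S, ξ ≠ 0 → (ξ : (Fin (k + 2) → X) → ℝ) ≠ 0 := by
    intro ξ hne h0
    exact hne (Subtype.ext h0)
  have hposdef : ∀ ξ : S, ξ ≠ 0 →
      0 < formInner w (ξ : (Fin (k + 2) → X) → ℝ) (ξ : (Fin (k + 2) → X) → ℝ) := by
    intro ξ hne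
    exact formInner_self_pos w (hξgf ξ).1 (hcoene ξ hne)
  -- Part 1
  have part1 : ∀ ξ : S, ξ ≠ 0 →
      0 < formInner w ((A ξ : (Fin (k + 2) → X) → ℝ)) (ξ : (Fin (k + 2) → X) → ℝ) := by
    intro ξ hne
    rw [hA ξ ξ]
    rcases lt_or_eq_of_le (innerBdry_self_nonneg w B
      (Nop w B (ξ : (Fin (k + 2) → X) → ℝ))) with h | h
    · exact h
    · exfalso
      have hzero := innerBdry_self_eq_zero_imp w B h.symm
      have hq : formInner w (ξ : (Fin (k + 2) → X) → ℝ) (ξ : (Fin (k + 2) → X) → ℝ) = 0 := by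
        rw [E1 ξ, innerBdry_congr_right w B (β' := 0)
          (fun v h0 hi hw => by rw [Pi.zero_apply]; exact hzero v h0 hi hw)]
        exact innerBdry_zero_right w B _
      exact absurd hq (hposdef ξ hne).ne'
  -- Part 2
  have part2 : ∀ ξ ζ : S, formInner w ((A ξ : (Fin (k + 2) → X) → ℝ))
      (ζ : (Fin (k + 2) → X) → ℝ) =
      formInner w (ξ : (Fin (k + 2) → X) → ℝ) ((A ζ : (Fin (k + 2) → X) → ℝ)) := by
    intro ξ ζ
    rw [hA ξ ζ, formInner_symm, hA ζ ξ, innerBdry_symm]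
  refine ⟨part1, part2, ?_⟩
  intro lam e hlam heig horth N mu φ hmu hmupos hφform hφorth hext hker
  choose ω hωgf hωδ hωtr hωN using hext
  -- the key pairing identity ⟪φⱼ, Nξ⟫ = μⱼ ⟪pot ξ, φⱼ⟫
  have hIBej : ∀ (ξ : S) (j : Fin N),
      innerBdry w B (φ j) (Nop w B (ξ : (Fin (k + 2) → X) → ℝ)) =
        mu j * innerBdry w B (pot ξ) (φ j) := by
    intro ξ j
    have h1 : innerBdry w B (φ j) (Nop w B (ξ : (Fin (k + 2) → X) → ℝ)) =
        innerBdry w B (ω j) (Nop w B (ξ : (Fin (k + 2) → X) → ℝ)) :=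
      innerBdry_congr_left w B
        (fun v h0 hi hw => (hωtr j v ⟨clique_of_w_ne_zero hw, h0, hi⟩).symm)
    have h2 : innerBdry w B (ω j) (Nop w B (ξ : (Fin (k + 2) → X) → ℝ)) =
        formInner w (gd G (ω j)) (ξ : (Fin (k + 2) → X) → ℝ) :=
      (green hB w (hωgf j) (hξgf ξ) (hξδ ξ)).symm
    have h3 : formInner w (gd G (ω j)) (ξ : (Fin (k + 2) → X) → ℝ) =
        formInner w (gd G (pot ξ)) (gd G (ω j)) := by
      rw [formInner_symm, hgd ξ]
    have h4 : formInner w (gd G (pot ξ)) (gd G (ω j)) =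
        innerBdry w B (pot ξ) (Nop w B (gd G (ω j))) :=
      green hB w (hpotgf ξ) (gd_isGraphForm (hωgf j)) (hωδ j)
    have h5 : innerBdry w B (pot ξ) (Nop w B (gd G (ω j))) =
        innerBdry w B (pot ξ) (mu j • φ j) :=
      innerBdry_congr_right w B (fun v h0 hi hw => by
        rw [Pi.smul_apply, smul_eq_mul]
        exact hωN j v ⟨clique_of_w_ne_zero hw, h0, hi⟩)
    have h6 : innerBdry w B (pot ξ) (mu j • φ j) = mu j * innerBdry w B (pot ξ) (φ j) := by
      rw [← IB_apply, map_smul, smul_eq_mul, IB_apply]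
    rw [h1, h2, h3, h4, h5, h6]
  -- pairing with forms orthogonal to all φⱼ vanishes
  have hkerzero : ∀ (ξ : S) (ψp : (Fin (k + 1) → X) → ℝ), IsBdryForm G B k ψp →
      (∀ j, innerBdry w B ψp (φ j) = 0) →
      innerBdry w B ψp (Nop w B (ξ : (Fin (k + 2) → X) → ℝ)) = 0 := by
    intro ξ ψp hψform hψperp
    obtain ⟨ω0, hω0gf, hω0δ, hω0tr, hω0N⟩ := hker ψp hψform hψperp
    have h1 : innerBdry w B ψp (Nop w B (ξ : (Fin (k + 2) → X) → ℝ)) =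
        innerBdry w B ω0 (Nop w B (ξ : (Fin (k + 2) → X) → ℝ)) :=
      innerBdry_congr_left w B
        (fun v h0 hi hw => (hω0tr v ⟨clique_of_w_ne_zero hw, h0, hi⟩).symm)
    have h2 : innerBdry w B ω0 (Nop w B (ξ : (Fin (k + 2) → X) → ℝ)) =
        formInner w (gd G ω0) (ξ : (Fin (k + 2) → X) → ℝ) :=
      (green hB w hω0gf (hξgf ξ) (hξδ ξ)).symm
    have h3 : formInner w (gd G ω0) (ξ : (Fin (k + 2) → X) → ℝ) =
        formInner w (gd G (pot ξ)) (gd G ω0) := by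
      rw [formInner_symm, hgd ξ]
    have h4 : formInner w (gd G (pot ξ)) (gd G ω0) =
        innerBdry w B (pot ξ) (Nop w B (gd G ω0)) :=
      green hB w (hpotgf ξ) (gd_isGraphForm hω0gf) hω0δ
    have h5 : innerBdry w B (pot ξ) (Nop w B (gd G ω0)) = 0 := by
      rw [innerBdry_congr_right w B (β' := 0) (fun v h0 hi hw => by
        rw [Pi.zero_apply]; exact hω0N v ⟨clique_of_w_ne_zero hw, h0, hi⟩)]
      exact innerBdry_zero_right w B _
    rw [h1, h2, h3, h4, h5]
  -- the boundary trace
  let tr : S → ((Fin (k + 1) → X) → ℝ) := fun ξ v => if IsBdryTuple G B v then pot ξ v else 0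
  have htrform : ∀ ξ : S, IsBdryForm G B k (tr ξ) := fun ξ => isBdryForm_trunc (hpotgf ξ)
  have htreq : ∀ (ξ : S) (β : (Fin (k + 1) → X) → ℝ),
      innerBdry w B (tr ξ) β = innerBdry w B (pot ξ) β := by
    intro ξ β
    exact innerBdry_congr_left w B
      (fun v h0 hi hw => if_pos ⟨clique_of_w_ne_zero hw, h0, hi⟩)
  -- injectivity of the coefficient map, giving n ≤ N
  let cmap : S →ₗ[ℝ] (Fin N → ℝ) :=
    { toFun := fun ξ => fun j => innerBdry w B (pot ξ) (φ j)
      map_add' := by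
        intro ξ ζ
        funext j
        simp only [Pi.add_apply]
        rw [map_add pot, ← IB_apply, map_add, LinearMap.add_apply, IB_apply, IB_apply]
      map_smul' := by
        intro c ξ
        funext j
        simp only [Pi.smul_apply, RingHom.id_apply, smul_eq_mul]
        rw [map_smul pot, ← IB_apply, map_smul, LinearMap.smul_apply, smul_eq_mul, IB_apply] }
  have hcmap_apply : ∀ (ξ : S) (j : Fin N), cmap ξ j = innerBdry w B (pot ξ) (φ j) :=
    fun ξ j => rfl
  have hcinj : Function.Injective cmap := by
    apply LinearMap.ker_eq_bot.1
    apply LinearMap.ker_eq_bot'.2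
    intro ξ hc0
    by_contra hne
    have hperp : ∀ j, innerBdry w B (tr ξ) (φ j) = 0 := by
      intro j
      rw [htreq]
      have := congrFun hc0 j
      simpa [hcmap_apply] using this
    have hq : formInner w (ξ : (Fin (k + 2) → X) → ℝ) (ξ : (Fin (k + 2) → X) → ℝ) = 0 := by
      rw [E1 ξ, ← htreq ξ]
      exact hkerzero ξ (tr ξ) (htrform ξ) hperp
    exact absurd hq (hposdef ξ hne).ne'
  have hn : n ≤ N := by
    have h1 := LinearMap.finrank_le_finrank_of_injective hcinj
    rw [hdim, Module.finrank_fin_fun ℝ] at h1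
    exact h1
  refine ⟨hn, ?_⟩
  intro i
  set i' : ℕ := (i : ℕ) with hi'def
  have hi1n : i' + 1 ≤ n := i.2
  let el : Fin (i' + 1) → Fin n := fun l => Fin.castLE hi1n l
  have hel_le : ∀ l, el l ≤ i := by
    intro l
    rw [Fin.le_def]
    exact Nat.lt_succ_iff.1 l.2
  have hel_inj : Function.Injective el := fun l m h => by
    apply Fin.ext
    have := congrArg Fin.val h
    simpa [el] using this
  -- find a nonzero combination annihilating the first i' coefficients
  have hjN : ∀ j : Fin i', (j : ℕ) < N := fun j => lt_of_lt_of_le (j.2.trans i.2) hn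
  let Φ : (Fin (i' + 1) → ℝ) →ₗ[ℝ] (Fin i' → ℝ) :=
    { toFun := fun c => fun j => ∑ l : Fin (i' + 1), c l * cmap (e (el l)) ⟨(j : ℕ), hjN j⟩
      map_add' := by
        intro c c'
        funext j
        simp only [Pi.add_apply, add_mul, Finset.sum_add_distrib]
      map_smul' := by
        intro a c
        funext j
        simp only [Pi.smul_apply, RingHom.id_apply, smul_eq_mul, mul_assoc, ← Finset.mul_sum] }
  obtain ⟨c, hc0, hcker⟩ : ∃ c : Fin (i' + 1) → ℝ, c ≠ 0 ∧ Φ c = 0 := by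
    by_contra hcon
    push_neg at hcon
    have hinj : Function.Injective Φ := by
      apply LinearMap.ker_eq_bot.1
      apply LinearMap.ker_eq_bot'.2
      intro c hc
      by_contra hne
      exact hcon c hne hc
    have hle := LinearMap.finrank_le_finrank_of_injective hinj
    rw [Module.finrank_fin_fun ℝ, Module.finrank_fin_fun ℝ] at hle
    omega
  set ξ : S := ∑ l : Fin (i' + 1), c l • e (el l) with hξdef
  have hcoesum : ∀ (d : Fin (i' + 1) → ℝ) (g : Fin (i' + 1) → S),
      ((∑ l, d l • g l : S) : (Fin (k + 2) → X) → ℝ) =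
        ∑ l, d l • ((g l : S) : (Fin (k + 2) → X) → ℝ) := by
    intro d g
    calc ((∑ l, d l • g l : S) : (Fin (k + 2) → X) → ℝ)
        = S.subtype (∑ l, d l • g l) := rfl
      _ = ∑ l, S.subtype (d l • g l) := map_sum _ _ _
      _ = ∑ l, d l • ((g l : S) : (Fin (k + 2) → X) → ℝ) := by
          apply Finset.sum_congr rfl
          intro l _
          rw [map_smul]
          rfl
  -- expansions of the form inner product on combinations of eigenvectors
  have hFIe : ∀ l m : Fin (i' + 1),
      formInner w ((e (el l) : S) : (Fin (k + 2) → X) → ℝ)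
        ((e (el m) : S) : (Fin (k + 2) → X) → ℝ) = if l = m then 1 else 0 := by
    intro l m
    rw [horth (el l) (el m)]
    by_cases h : l = m
    · rw [if_pos h, if_pos (by rw [h])]
    · rw [if_neg h, if_neg (fun hc => h (hel_inj hc))]
  have hdouble : ∀ d d' : Fin (i' + 1) → ℝ,
      formInner w (∑ l, d l • ((e (el l) : S) : (Fin (k + 2) → X) → ℝ))
        (∑ m, d' m • ((e (el m) : S) : (Fin (k + 2) → X) → ℝ)) = ∑ l, d l * d' l := by
    intro d d'
    rw [formInner_sum_left]
    apply Finset.sum_congr rfl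
    intro l _
    rw [formInner_sum_right]
    have hinner : ∀ m : Fin (i' + 1),
        d' m * formInner w ((e (el l) : S) : (Fin (k + 2) → X) → ℝ)
          ((e (el m) : S) : (Fin (k + 2) → X) → ℝ) = if l = m then d' m else 0 := by
      intro m
      rw [hFIe l m]
      by_cases h : l = m
      · rw [if_pos h, if_pos h, mul_one]
      · rw [if_neg h, if_neg h, mul_zero]
    rw [Finset.sum_congr rfl (fun m _ => hinner m), Finset.sum_ite_eq, if_pos (Finset.mem_univ l)]
  -- ξ is nonzero
  have hξne : ξ ≠ 0 := by
    intro h0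
    obtain ⟨l0, hl0⟩ := Function.ne_iff.1 hc0
    apply hl0
    have hδl : ∀ l : Fin (i' + 1), (if l = l0 then (1:ℝ) else 0) = if l0 = l then 1 else 0 := by
      intro l
      by_cases h : l = l0
      · rw [if_pos h, if_pos h.symm]
      · rw [if_neg h, if_neg (fun hc => h hc.symm)]
    have h1 : formInner w ((ξ : S) : (Fin (k + 2) → X) → ℝ)
        ((e (el l0) : S) : (Fin (k + 2) → X) → ℝ) = c l0 := by
      rw [hξdef, hcoesum]
      rw [formInner_sum_left]
      have : ∀ l : Fin (i' + 1), c l * formInner w ((e (el l) : S) : (Fin (k + 2) → X) → ℝ)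
          ((e (el l0) : S) : (Fin (k + 2) → X) → ℝ) = if l = l0 then c l else 0 := by
        intro l
        rw [hFIe l l0]
        by_cases h : l = l0
        · rw [if_pos h, if_pos h, mul_one]
        · rw [if_neg h, if_neg h, mul_zero]
      rw [Finset.sum_congr rfl (fun l _ => this l), Finset.sum_ite_eq',
        if_pos (Finset.mem_univ l0)]
    rw [h0] at h1
    have h2 : ((0 : S) : (Fin (k + 2) → X) → ℝ) = 0 := rfl
    rw [h2] at h1
    have h3 : formInner w (0 : (Fin (k + 2) → X) → ℝ)
        ((e (el l0) : S) : (Fin (k + 2) → X) → ℝ) = 0 := by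
      rw [← FI_apply, map_zero, LinearMap.zero_apply]
    rw [h3] at h1
    exact h1.symm
  have hq : 0 < formInner w ((ξ : S) : (Fin (k + 2) → X) → ℝ)
      ((ξ : S) : (Fin (k + 2) → X) → ℝ) := hposdef ξ hξne
  -- the boundary coefficients of ξ
  set aj : Fin N → ℝ := fun j => innerBdry w B (pot ξ) (φ j) with hajdef
  have hajexp : ∀ j : Fin N, aj j = ∑ l : Fin (i' + 1), c l * cmap (e (el l)) j := by
    intro j
    have hpotξ : pot ξ = ∑ l, c l • pot (e (el l)) := by
      rw [hξdef, map_sum]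
      apply Finset.sum_congr rfl
      intro l _
      rw [map_smul]
    show innerBdry w B (pot ξ) (φ j) = _
    rw [hpotξ, innerBdry_sum_left]
    apply Finset.sum_congr rfl
    intro l _
    rw [hcmap_apply]
  have hajsmall : ∀ j : Fin N, (j : ℕ) < i' → aj j = 0 := by
    intro j hj
    have hc := congrFun hcker (⟨(j : ℕ), hj⟩ : Fin i')
    have hjeq : (⟨((⟨(j : ℕ), hj⟩ : Fin i') : ℕ), hjN ⟨(j : ℕ), hj⟩⟩ : Fin N) = j := by
      apply Fin.ext
      rfl
    have hΦval : Φ c ⟨(j : ℕ), hj⟩ =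
        ∑ l : Fin (i' + 1), c l * cmap (e (el l)) j := by
      show (∑ l : Fin (i' + 1), c l * cmap (e (el l))
        (⟨((⟨(j : ℕ), hj⟩ : Fin i') : ℕ), hjN ⟨(j : ℕ), hj⟩⟩ : Fin N)) = _
      rw [hjeq]
    rw [hΦval] at hc
    rw [hajexp j, hc]
    rfl
  -- decompose the trace of ξ
  set ψperp : (Fin (k + 1) → X) → ℝ := tr ξ - ∑ j : Fin N, aj j • φ j with hψperpdef
  have hψperpform : IsBdryForm G B k ψperp :=
    (htrform ξ).sub (isBdryForm_sum _ _ (fun j _ => (hφform j).smul _))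
  have hψperpperp : ∀ l, innerBdry w B ψperp (φ l) = 0 := by
    intro l
    rw [hψperpdef, innerBdry_sub_left, innerBdry_sum_left]
    have h1 : innerBdry w B (tr ξ) (φ l) = aj l := htreq ξ (φ l)
    have h2 : ∀ j : Fin N, aj j * innerBdry w B (φ j) (φ l) = if j = l then aj j else 0 := by
      intro j
      rw [hφorth j l]
      by_cases h : j = l
      · rw [if_pos h, if_pos h, mul_one]
      · rw [if_neg h, if_neg h, mul_zero]
    rw [h1, Finset.sum_congr rfl (fun j _ => h2 j), Finset.sum_ite_eq',
      if_pos (Finset.mem_univ l), sub_self]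
  -- q = Σ μⱼ aⱼ²
  have hsumq : formInner w ((ξ : S) : (Fin (k + 2) → X) → ℝ)
      ((ξ : S) : (Fin (k + 2) → X) → ℝ) = ∑ j : Fin N, mu j * (aj j * aj j) := by
    rw [E1 ξ, ← htreq ξ]
    have hsplit : tr ξ = ψperp + ∑ j : Fin N, aj j • φ j := by
      rw [hψperpdef, sub_add_cancel]
    rw [hsplit, innerBdry_add_left,
      hkerzero ξ ψperp hψperpform hψperpperp, zero_add, innerBdry_sum_left]
    apply Finset.sum_congr rfl
    intro j _
    rw [hIBej ξ j]
    show aj j * (mu j * aj j) = _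
    ring
  -- Bessel inequality
  set bj : Fin N → ℝ := fun j => mu j * aj j with hbjdef
  set Nx : (Fin (k + 1) → X) → ℝ := Nop w B ((ξ : S) : (Fin (k + 2) → X) → ℝ) with hNxdef
  have hNb : ∀ j, innerBdry w B (φ j) Nx = bj j := fun j => hIBej ξ j
  have hbessel : ∑ j : Fin N, bj j * bj j ≤ innerBdry w B Nx Nx := by
    have hnn := innerBdry_self_nonneg w B (Nx - ∑ j : Fin N, bj j • φ j)
    have hxy : innerBdry w B Nx (∑ j : Fin N, bj j • φ j) = ∑ j : Fin N, bj j * bj j := by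
      rw [innerBdry_sum_right]
      apply Finset.sum_congr rfl
      intro j _
      rw [innerBdry_symm, hNb j]
    have hyx : innerBdry w B (∑ j : Fin N, bj j • φ j) Nx = ∑ j : Fin N, bj j * bj j := by
      rw [innerBdry_sum_left]
      apply Finset.sum_congr rfl
      intro j _
      rw [hNb j]
    have hyy : innerBdry w B (∑ j : Fin N, bj j • φ j) (∑ j : Fin N, bj j • φ j) =
        ∑ j : Fin N, bj j * bj j := by
      rw [innerBdry_sum_left]
      apply Finset.sum_congr rfl
      intro j _
      rw [innerBdry_sum_right]
      have : ∀ l : Fin N, bj l * innerBdry w B (φ j) (φ l) = if j = l then bj l else 0 := by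
        intro l
        rw [hφorth j l]
        by_cases h : j = l
        · rw [if_pos h, if_pos h, mul_one]
        · rw [if_neg h, if_neg h, mul_zero]
      rw [Finset.sum_congr rfl (fun l _ => this l), Finset.sum_ite_eq,
        if_pos (Finset.mem_univ j)]
    have hexp : innerBdry w B (Nx - ∑ j : Fin N, bj j • φ j) (Nx - ∑ j : Fin N, bj j • φ j) =
        innerBdry w B Nx Nx - ∑ j : Fin N, bj j * bj j := by
      rw [innerBdry_sub_left, innerBdry_sub_right, innerBdry_sub_right, hxy, hyx, hyy]
      ring
    rw [hexp] at hnn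
    linarith
  -- lower bound
  have hlow : mu (Fin.castLE hn i) * formInner w ((ξ : S) : (Fin (k + 2) → X) → ℝ)
      ((ξ : S) : (Fin (k + 2) → X) → ℝ) ≤ ∑ j : Fin N, bj j * bj j := by
    rw [hsumq, Finset.mul_sum]
    apply Finset.sum_le_sum
    intro j _
    by_cases hj : (j : ℕ) < i'
    · rw [hajsmall j hj]
      show mu (Fin.castLE hn i) * (mu j * (0 * 0)) ≤ bj j * bj j
      rw [hbjdef]
      show _ ≤ (mu j * aj j) * (mu j * aj j)
      rw [hajsmall j hj]
      ring_nf
      exact le_refl 0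
    · have hle : Fin.castLE hn i ≤ j := by
        rw [Fin.le_def]
        exact not_lt.1 hj
      have h1 : mu (Fin.castLE hn i) ≤ mu j := hmu hle
      have h2 : 0 < mu j := hmupos j
      show mu (Fin.castLE hn i) * (mu j * (aj j * aj j)) ≤ bj j * bj j
      rw [hbjdef]
      show _ ≤ (mu j * aj j) * (mu j * aj j)
      calc mu (Fin.castLE hn i) * (mu j * (aj j * aj j))
          = (mu (Fin.castLE hn i) * mu j) * (aj j * aj j) := by ring
        _ ≤ (mu j * mu j) * (aj j * aj j) :=
            mul_le_mul_of_nonneg_right (mul_le_mul_of_nonneg_right h1 h2.le)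
              (mul_self_nonneg _)
        _ = (mu j * aj j) * (mu j * aj j) := by ring
  -- upper bound
  have hcoeA : ((A ξ : S) : (Fin (k + 2) → X) → ℝ) =
      ∑ l, (c l * lam (el l)) • ((e (el l) : S) : (Fin (k + 2) → X) → ℝ) := by
    have h1 : A ξ = ∑ l, (c l * lam (el l)) • e (el l) := by
      rw [hξdef, map_sum]
      apply Finset.sum_congr rfl
      intro l _
      rw [map_smul, heig (el l), smul_smul]
    rw [h1, hcoesum]
  have hup : formInner w ((A ξ : S) : (Fin (k + 2) → X) → ℝ)
      ((ξ : S) : (Fin (k + 2) → X) → ℝ) ≤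
      lam i * formInner w ((ξ : S) : (Fin (k + 2) → X) → ℝ)
        ((ξ : S) : (Fin (k + 2) → X) → ℝ) := by
    have hexpA : formInner w ((A ξ : S) : (Fin (k + 2) → X) → ℝ)
        ((ξ : S) : (Fin (k + 2) → X) → ℝ) = ∑ l, (c l * lam (el l)) * c l := by
      rw [hcoeA]
      conv_lhs => rw [hξdef, hcoesum]
      exact hdouble _ _
    have hexpq : formInner w ((ξ : S) : (Fin (k + 2) → X) → ℝ)
        ((ξ : S) : (Fin (k + 2) → X) → ℝ) = ∑ l, c l * c l := by
      conv_lhs => rw [hξdef, hcoesum]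
      exact hdouble _ _
    rw [hexpA, hexpq, Finset.mul_sum]
    apply Finset.sum_le_sum
    intro l _
    have hlaml : lam (el l) ≤ lam i := hlam (hel_le l)
    calc (c l * lam (el l)) * c l = lam (el l) * (c l * c l) := by ring
      _ ≤ lam i * (c l * c l) :=
          mul_le_mul_of_nonneg_right hlaml (mul_self_nonneg _)
  -- conclude
  have hAform : formInner w ((A ξ : S) : (Fin (k + 2) → X) → ℝ)
      ((ξ : S) : (Fin (k + 2) → X) → ℝ) = innerBdry w B Nx Nx := hA ξ ξ
  have hchain : mu (Fin.castLE hn i) * formInner w ((ξ : S) : (Fin (k + 2) → X) → ℝ)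
      ((ξ : S) : (Fin (k + 2) → X) → ℝ) ≤
      lam i * formInner w ((ξ : S) : (Fin (k + 2) → X) → ℝ)
        ((ξ : S) : (Fin (k + 2) → X) → ℝ) := by
    calc mu (Fin.castLE hn i) * _ ≤ ∑ j : Fin N, bj j * bj j := hlow
      _ ≤ innerBdry w B Nx Nx := hbessel
      _ = formInner w ((A ξ : S) : (Fin (k + 2) → X) → ℝ)
          ((ξ : S) : (Fin (k + 2) → X) → ℝ) := hAform.symm
      _ ≤ _ := hup
  exact (mul_le_mul_iff_of_pos_right hq).1 hchain

end GraphHodge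
end

section
/- Let G be the integer lattice graph on ℤ^n (edges between points at ℓ^1-distance 1), and Ω a nonempty finite subset of ℤ^n. Consider the graph Ω̃ (vertices Ω̄ = Ω ∪ δΩ, edges E(Ω, Ω̄)) with unit edge weight and the induced normalized weights. Then the sum of the first n positive eigenvalues of the Steklov (DtN) operator T^{(0)} satisfies λ_1(T^{(0)}) + ... + λ_n(T^{(0)}) ≤ Σ_{v∈δΩ} (1/deg v) Σ_{i=1}^n deg_i(v)/|E_i(Ω̃)|, and consequently λ_1 + ... + λ_n ≤ |δΩ| / min_{1≤i≤n} |E_i(Ω̃)|. -/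
open scoped Classical

namespace GraphHodge


/-- The integer lattice graph on `ℤⁿ`: edges between points at `ℓ¹`-distance `1`. -/
def latticeGraph (n : ℕ) : SimpleGraph (Fin n → ℤ) where
  Adj x y := ∑ i, (x i - y i).natAbs = 1
  symm := by
    refine ⟨fun x y h => ?_⟩
    have h : ∑ i, (x i - y i).natAbs = 1 := h
    show ∑ i, (y i - x i).natAbs = 1
    have : (∑ i, (y i - x i).natAbs) = ∑ i, (x i - y i).natAbs :=
      Finset.sum_congr rfl fun i _ => by rw [← neg_sub (x i) (y i), Int.natAbs_neg]
    rw [this]; exact h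
  loopless := by refine ⟨fun x h => ?_⟩; simp at h

/-- The `i`-th standard basis vector of `ℤⁿ`. -/
def eV (n : ℕ) (i : Fin n) : Fin n → ℤ := fun j => if j = i then 1 else 0

/-- `deg_i v`: the number of edges of `Ω̃` at `v` parallel to `e_i` (as a real). -/
noncomputable def latDegi (n : ℕ) (Ω : Finset (Fin n → ℤ)) (v : Fin n → ℤ) (i : Fin n) : ℝ :=
  (if v + eV n i ∈ Ω then 1 else 0) + (if v - eV n i ∈ Ω then 1 else 0)

/-- `deg v`: the degree of a boundary vertex `v` in `Ω̃` (as a real). -/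
noncomputable def latDeg (n : ℕ) (Ω : Finset (Fin n → ℤ)) (v : Fin n → ℤ) : ℝ :=
  ∑ i, latDegi n Ω v i

/-- The (normalized-weight) normal derivative of `f` at a boundary vertex `v`. -/
noncomputable def latN (n : ℕ) (Ω : Finset (Fin n → ℤ)) (f : (Fin n → ℤ) → ℝ)
    (v : Fin n → ℤ) : ℝ :=
  (latDeg n Ω v)⁻¹ * ∑ i : Fin n,
    ((if v + eV n i ∈ Ω then f v - f (v + eV n i) else 0) +
     (if v - eV n i ∈ Ω then f v - f (v - eV n i) else 0))

/-- The set `E_i(Ω̃)` of edges of `Ω̃` parallel to `e_i`, encoded by their lower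
endpoints. -/
def latEi (n : ℕ) (Ω : Finset (Fin n → ℤ)) (i : Fin n) : Finset (Fin n → ℤ) :=
  Ω ∪ Ω.image (fun x => x - eV n i)

/-! ### auxiliary -/

section Aux
variable {n : ℕ} (Ω : Finset (Fin n → ℤ))

/-- raw (unnormalized) normal derivative -/
noncomputable def ND (f : (Fin n → ℤ) → ℝ) (v : Fin n → ℤ) : ℝ :=
  ∑ i : Fin n, ((if v + eV n i ∈ Ω then f v - f (v + eV n i) else 0) +
     (if v - eV n i ∈ Ω then f v - f (v - eV n i) else 0))

lemma latN_eq (f : (Fin n → ℤ) → ℝ) (v : Fin n → ℤ) :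
    latN n Ω f v = (latDeg n Ω v)⁻¹ * ND Ω f v := rfl

/-- Dirichlet energy pairing over edges of `Ω̃`. -/
noncomputable def Een (f g : (Fin n → ℤ) → ℝ) : ℝ :=
  ∑ i : Fin n, ∑ x ∈ latEi n Ω i, (f (x + eV n i) - f x) * (g (x + eV n i) - g x)

lemma Een_symm (f g : (Fin n → ℤ) → ℝ) : Een Ω f g = Een Ω g f := by
  unfold Een; exact Finset.sum_congr rfl fun i _ => Finset.sum_congr rfl fun x _ => mul_comm _ _

lemma sum_natAbs_eV (i : Fin n) : ∑ j, (eV n i j).natAbs = 1 := by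
  have : ∀ j, (eV n i j).natAbs = if j = i then 1 else 0 := by
    intro j; unfold eV; split_ifs <;> simp
  simp [this]

lemma adj_add_eV (x : Fin n → ℤ) (i : Fin n) : (latticeGraph n).Adj (x + eV n i) x := by
  show (∑ j, ((x + eV n i) j - x j).natAbs) = 1
  have : ∀ j, ((x + eV n i) j - x j).natAbs = (eV n i j).natAbs := by
    intro j; simp [Pi.add_apply]
  rw [Finset.sum_congr rfl fun j _ => this j]; exact sum_natAbs_eV i

lemma adj_sub_eV (x : Fin n → ℤ) (i : Fin n) : (latticeGraph n).Adj (x - eV n i) x := by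
  show (∑ j, ((x - eV n i) j - x j).natAbs) = 1
  have : ∀ j, ((x - eV n i) j - x j).natAbs = (eV n i j).natAbs := by
    intro j; rw [show (x - eV n i) j - x j = -(eV n i j) by simp [Pi.sub_apply], Int.natAbs_neg]
  rw [Finset.sum_congr rfl fun j _ => this j]; exact sum_natAbs_eV i

lemma mem_image_sub_iff (y : Fin n → ℤ) (i : Fin n) :
    y ∈ Ω.image (fun x => x - eV n i) ↔ y + eV n i ∈ Ω := by
  simp only [Finset.mem_image]
  constructor
  · rintro ⟨a, ha, rfl⟩; simpa using ha
  · intro h; exact ⟨y + eV n i, h, by abel⟩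

lemma mem_image_add_iff (y : Fin n → ℤ) (i : Fin n) :
    y ∈ Ω.image (fun x => x + eV n i) ↔ y - eV n i ∈ Ω := by
  simp only [Finset.mem_image]
  constructor
  · rintro ⟨a, ha, rfl⟩; simpa using ha
  · intro h; exact ⟨y - eV n i, h, by abel⟩

lemma mem_latEi (y : Fin n → ℤ) (i : Fin n) :
    y ∈ latEi n Ω i ↔ (y ∈ Ω ∨ y + eV n i ∈ Ω) := by
  unfold latEi; rw [Finset.mem_union, mem_image_sub_iff]


lemma latDegi_nonneg (v : Fin n → ℤ) (i : Fin n) : 0 ≤ latDegi n Ω v i := by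
  unfold latDegi; positivity

lemma latDeg_nonneg (v : Fin n → ℤ) : 0 ≤ latDeg n Ω v :=
  Finset.sum_nonneg fun i _ => latDegi_nonneg Ω v i

lemma adj_cases {x y : Fin n → ℤ} (h : (latticeGraph n).Adj x y) :
    ∃ i, y = x + eV n i ∨ y = x - eV n i := by
  have hsum : ∑ i, (x i - y i).natAbs = 1 := h
  have hex : ∃ i, (x i - y i).natAbs ≠ 0 := by
    by_contra hc
    push_neg at hc
    rw [Finset.sum_congr rfl fun i _ => hc i] at hsum
    simp at hsum
  obtain ⟨i, hi⟩ := hex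
  have h1 : (x i - y i).natAbs = 1 := by
    have hle : (x i - y i).natAbs ≤ 1 := hsum ▸ Finset.single_le_sum
      (f := fun j => (x j - y j).natAbs) (fun j _ => Nat.zero_le _) (Finset.mem_univ i)
    omega
  have hz : ∀ j, j ≠ i → (x j - y j).natAbs = 0 := by
    intro j hj
    have := Finset.add_sum_erase Finset.univ (fun j => (x j - y j).natAbs) (Finset.mem_univ i)
    rw [← this] at hsum
    rw [h1] at hsum
    have h0 : ∑ k ∈ Finset.univ.erase i, (x k - y k).natAbs = 0 := by omega
    exact (Finset.sum_eq_zero_iff.mp h0) j (Finset.mem_erase.mpr ⟨hj, Finset.mem_univ j⟩)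
  rcases Int.natAbs_eq_iff.mp h1 with hc | hc
  · -- x i - y i = 1, so y = x - eV
    refine ⟨i, Or.inr ?_⟩
    funext j
    by_cases hj : j = i
    · subst hj; simp [Pi.sub_apply, eV]; omega
    · have := hz j hj
      have : x j - y j = 0 := by omega
      simp [Pi.sub_apply, eV, hj]; omega
  · refine ⟨i, Or.inl ?_⟩
    funext j
    by_cases hj : j = i
    · subst hj; simp [Pi.add_apply, eV] at hc ⊢; omega
    · have := hz j hj
      have : x j - y j = 0 := by omega
      simp [Pi.add_apply, eV, hj]; omega


variable (bd : Finset (Fin n → ℤ))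
variable (hbd : ∀ x, x ∈ bd ↔ x ∉ Ω ∧ ∃ y ∈ Ω, (latticeGraph n).Adj x y)

include hbd in
lemma latDeg_pos {v : Fin n → ℤ} (hv : v ∈ bd) : 0 < latDeg n Ω v := by
  obtain ⟨hvn, y, hy, hadj⟩ := (hbd v).mp hv
  obtain ⟨i, hc | hc⟩ := adj_cases hadj
  · have h1 : (1:ℝ) ≤ latDegi n Ω v i := by
      unfold latDegi; rw [if_pos (hc ▸ hy)]
      have : (0:ℝ) ≤ if v - eV n i ∈ Ω then 1 else 0 := by positivity
      linarith
    calc (0:ℝ) < 1 := one_pos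
    _ ≤ latDegi n Ω v i := h1
    _ ≤ latDeg n Ω v := Finset.single_le_sum (f := fun i => latDegi n Ω v i)
        (fun j _ => latDegi_nonneg Ω v j) (Finset.mem_univ i)
  · have h1 : (1:ℝ) ≤ latDegi n Ω v i := by
      unfold latDegi; rw [if_pos (show v - eV n i ∈ Ω from hc ▸ hy)]
      have : (0:ℝ) ≤ if v + eV n i ∈ Ω then 1 else 0 := by positivity
      linarith
    calc (0:ℝ) < 1 := one_pos
    _ ≤ latDegi n Ω v i := h1
    _ ≤ latDeg n Ω v := Finset.single_le_sum (f := fun i => latDegi n Ω v i)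
        (fun j _ => latDegi_nonneg Ω v j) (Finset.mem_univ i)

include hbd in
/-- Green's identity: for `f` harmonic in `Ω`, the Dirichlet energy pairing equals
the boundary pairing with the raw normal derivative. -/
lemma green_s16 (f g : (Fin n → ℤ) → ℝ)
    (hf : ∀ x ∈ Ω, (∑ i, (2 * f x - f (x + eV n i) - f (x - eV n i))) = 0) :
    Een Ω f g = ∑ v ∈ bd, g v * ND Ω f v := by
  classical
  set B : Finset (Fin n → ℤ) := Ω ∪ bd with hB
  have hdisj : Disjoint Ω bd := by
    rw [Finset.disjoint_right]
    intro v hv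
    exact ((hbd v).mp hv).1
  -- P i = latEi shifted up
  set P : Fin n → Finset (Fin n → ℤ) := fun i => (latEi n Ω i).image (fun x => x + eV n i)
    with hP
  have hmemP : ∀ (y : Fin n → ℤ) (i : Fin n), y ∈ P i ↔ (y ∈ Ω ∨ y - eV n i ∈ Ω) := by
    intro y i
    rw [hP]
    simp only [Finset.mem_image]
    constructor
    · rintro ⟨a, ha, rfl⟩
      rcases (mem_latEi Ω a i).mp ha with h | h
      · right; simpa using h
      · left; exact h
    · rintro (h | h)
      · exact ⟨y - eV n i, (mem_latEi Ω _ i).mpr (Or.inr (by simpa using h)), by abel⟩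
      · exact ⟨y - eV n i, (mem_latEi Ω _ i).mpr (Or.inl h), by abel⟩
  have hPB : ∀ i, P i ⊆ B := by
    intro i y hy
    rcases (hmemP y i).mp hy with h | h
    · exact Finset.mem_union_left _ h
    · by_cases hyo : y ∈ Ω
      · exact Finset.mem_union_left _ hyo
      · refine Finset.mem_union_right _ ((hbd y).mpr ⟨hyo, y - eV n i, h, ?_⟩)
        have := adj_sub_eV (n := n) y i
        exact ((latticeGraph n).adj_symm this)
  have hMB : ∀ i, latEi n Ω i ⊆ B := by
    intro i y hy
    rcases (mem_latEi Ω y i).mp hy with h | h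
    · exact Finset.mem_union_left _ h
    · by_cases hyo : y ∈ Ω
      · exact Finset.mem_union_left _ hyo
      · refine Finset.mem_union_right _ ((hbd y).mpr ⟨hyo, y + eV n i, h, ?_⟩)
        have := adj_add_eV (n := n) y i
        exact ((latticeGraph n).adj_symm this)
  -- expand the energy
  have step1 : Een Ω f g =
      ∑ i : Fin n, (∑ y ∈ P i, (f y - f (y - eV n i)) * g y
        + ∑ x ∈ latEi n Ω i, (f x - f (x + eV n i)) * g x) := by
    unfold Een
    refine Finset.sum_congr rfl fun i _ => ?_
    have expand : ∀ x : Fin n → ℤ,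
        (f (x + eV n i) - f x) * (g (x + eV n i) - g x)
        = (f (x + eV n i) - f x) * g (x + eV n i) + (f x - f (x + eV n i)) * g x := by
      intro x; ring
    rw [Finset.sum_congr rfl fun x _ => expand x, Finset.sum_add_distrib]
    congr 1
    rw [hP, Finset.sum_image]
    · refine Finset.sum_congr rfl fun x _ => ?_
      have : x + eV n i - eV n i = x := by abel
      rw [this]
    · intro a _ b _ h
      have := congrArg (fun z => z - eV n i) h
      simpa using this
  -- rewrite each sum as a sum over B with indicators
  have toB : ∀ (s : Finset (Fin n → ℤ)) (F : (Fin n → ℤ) → ℝ), s ⊆ B →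
      ∑ y ∈ s, F y = ∑ y ∈ B, (if y ∈ s then F y else 0) := by
    intro s F hs
    rw [Finset.sum_ite_mem, Finset.inter_eq_right.mpr hs]
  have step2 : Een Ω f g = ∑ y ∈ B, g y *
      (∑ i : Fin n, ((if y ∈ P i then f y - f (y - eV n i) else 0)
        + (if y ∈ latEi n Ω i then f y - f (y + eV n i) else 0))) := by
    rw [step1]
    have : ∀ i : Fin n, (∑ y ∈ P i, (f y - f (y - eV n i)) * g y
        + ∑ x ∈ latEi n Ω i, (f x - f (x + eV n i)) * g x)
        = ∑ y ∈ B, ((if y ∈ P i then (f y - f (y - eV n i)) * g y else 0)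
          + (if y ∈ latEi n Ω i then (f y - f (y + eV n i)) * g y else 0)) := by
      intro i
      rw [toB _ _ (hPB i), toB _ _ (hMB i), Finset.sum_add_distrib]
    rw [Finset.sum_congr rfl fun i _ => this i, Finset.sum_comm]
    refine Finset.sum_congr rfl fun y _ => ?_
    rw [Finset.mul_sum]
    refine Finset.sum_congr rfl fun i _ => ?_
    split_ifs <;> ring
  rw [step2, hB, Finset.sum_union hdisj]
  have hΩ0 : ∀ y ∈ Ω, g y *
      (∑ i : Fin n, ((if y ∈ P i then f y - f (y - eV n i) else 0)
        + (if y ∈ latEi n Ω i then f y - f (y + eV n i) else 0))) = 0 := by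
    intro y hy
    have : (∑ i : Fin n, ((if y ∈ P i then f y - f (y - eV n i) else 0)
        + (if y ∈ latEi n Ω i then f y - f (y + eV n i) else 0))) = 0 := by
      have : ∀ i : Fin n, ((if y ∈ P i then f y - f (y - eV n i) else 0)
          + (if y ∈ latEi n Ω i then f y - f (y + eV n i) else 0))
          = 2 * f y - f (y + eV n i) - f (y - eV n i) := by
        intro i
        rw [if_pos ((hmemP y i).mpr (Or.inl hy)), if_pos ((mem_latEi Ω y i).mpr (Or.inl hy))]
        ring
      rw [Finset.sum_congr rfl fun i _ => this i]
      exact hf y hy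
    rw [this, mul_zero]
  rw [Finset.sum_congr rfl hΩ0, Finset.sum_const_zero, zero_add]
  refine Finset.sum_congr rfl fun v hv => ?_
  have hvn : v ∉ Ω := ((hbd v).mp hv).1
  congr 1
  unfold ND
  refine Finset.sum_congr rfl fun i _ => ?_
  have e1 : v ∈ P i ↔ v - eV n i ∈ Ω := by
    rw [hmemP]; simp [hvn]
  have e2 : v ∈ latEi n Ω i ↔ v + eV n i ∈ Ω := by
    rw [mem_latEi]; simp [hvn]
  rw [if_congr e1 rfl rfl, if_congr e2 rfl rfl, add_comm]


/-- the `i`-th coordinate function, real valued -/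
noncomputable def Xc (i : Fin n) : (Fin n → ℤ) → ℝ := fun x => (x i : ℝ)

omit Ω in
lemma eV_apply (i j : Fin n) : eV n i j = if j = i then 1 else 0 := rfl

lemma Xc_harm (i : Fin n) (x : Fin n → ℤ) :
    (∑ k, (2 * Xc (n := n) i x - Xc i (x + eV n k) - Xc i (x - eV n k))) = 0 := by
  refine Finset.sum_eq_zero fun k _ => ?_
  unfold Xc
  simp only [Pi.add_apply, Pi.sub_apply]
  push_cast
  ring

/-- combinatorial normal derivative of the coordinate function -/
noncomputable def dI (i : Fin n) (v : Fin n → ℤ) : ℝ :=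
  (if v - eV n i ∈ Ω then (1:ℝ) else 0) - (if v + eV n i ∈ Ω then 1 else 0)

lemma ND_coord (l : Fin n) (v : Fin n → ℤ) : ND Ω (Xc l) v = dI Ω l v := by
  unfold ND dI
  have key : ∀ i : Fin n,
      ((if v + eV n i ∈ Ω then Xc l v - Xc l (v + eV n i) else 0) +
       (if v - eV n i ∈ Ω then Xc l v - Xc l (v - eV n i) else 0))
      = (if i = l then ((if v - eV n i ∈ Ω then (1:ℝ) else 0)
          - (if v + eV n i ∈ Ω then 1 else 0)) else 0) := by
    intro i
    unfold Xc
    simp only [Pi.add_apply, Pi.sub_apply, eV_apply]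
    by_cases hil : i = l
    · subst hil
      simp only [if_pos rfl]
      push_cast
      split_ifs <;> ring
    · rw [if_neg hil]
      have : (if l = i then (1:ℤ) else 0) = 0 := by
        rw [if_neg (fun h => hil h.symm)]
      rw [this]
      push_cast
      split_ifs <;> ring
  rw [Finset.sum_congr rfl fun i _ => key i, Finset.sum_ite_eq' Finset.univ l
    (fun i => (if v - eV n i ∈ Ω then (1:ℝ) else 0) - (if v + eV n i ∈ Ω then 1 else 0))]
  simp

lemma Xc_diff (i l : Fin n) (x : Fin n → ℤ) :
    Xc (n := n) l (x + eV n i) - Xc l x = if i = l then (1:ℝ) else 0 := by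
  unfold Xc
  simp only [Pi.add_apply, eV_apply]
  by_cases h : i = l
  · subst h; simp
  · rw [if_neg h, if_neg (fun hh => h hh.symm)]; push_cast; ring

lemma Een_coord (i l : Fin n) :
    Een Ω (Xc i) (Xc l) = if i = l then ((latEi n Ω i).card : ℝ) else 0 := by
  unfold Een
  have key : ∀ k : Fin n, ∑ x ∈ latEi n Ω k,
      (Xc i (x + eV n k) - Xc i x) * (Xc l (x + eV n k) - Xc l x)
      = if k = i then (if k = l then ((latEi n Ω k).card : ℝ) else 0) else 0 := by
    intro k
    have : ∀ x, (Xc (n := n) i (x + eV n k) - Xc i x) * (Xc l (x + eV n k) - Xc l x)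
        = (if k = i then (1:ℝ) else 0) * (if k = l then (1:ℝ) else 0) := by
      intro x; rw [Xc_diff, Xc_diff]
    rw [Finset.sum_congr rfl fun x _ => this x, Finset.sum_const]
    split_ifs <;> simp [mul_comm]
  rw [Finset.sum_congr rfl fun k _ => key k]
  rw [Finset.sum_ite_eq' Finset.univ i (fun k => if k = l then ((latEi n Ω k).card : ℝ) else 0)]
  simp only [Finset.mem_univ, if_true]


omit Ω in
/-- Bessel's inequality for a finite orthonormal family w.r.t. a nonnegative weight. -/
lemma bessel {ι κ : Type*} [Fintype ι] [DecidableEq ι] (s : Finset κ) (W : κ → ℝ)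
    (hW : ∀ v ∈ s, 0 ≤ W v) (u : ι → κ → ℝ)
    (horth : ∀ j l, (∑ v ∈ s, u j v * u l v * W v) = if j = l then (1:ℝ) else 0)
    (ψ : κ → ℝ) :
    ∑ j : ι, (∑ v ∈ s, ψ v * u j v * W v)^2 ≤ ∑ v ∈ s, ψ v * ψ v * W v := by
  set β : ι → ℝ := fun j => ∑ v ∈ s, ψ v * u j v * W v with hβ
  set S : κ → ℝ := fun v => ∑ j : ι, β j * u j v with hS
  have hD : 0 ≤ ∑ v ∈ s, (ψ v - S v)^2 * W v :=
    Finset.sum_nonneg fun v hv => mul_nonneg (sq_nonneg _) (hW v hv)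
  have cross : ∑ v ∈ s, ψ v * S v * W v = ∑ j : ι, β j * β j := by
    have : ∀ v ∈ s, ψ v * S v * W v = ∑ j : ι, β j * (ψ v * u j v * W v) := by
      intro v _
      rw [hS]
      simp only
      rw [Finset.mul_sum, Finset.sum_mul]
      exact Finset.sum_congr rfl fun j _ => by ring
    rw [Finset.sum_congr rfl this, Finset.sum_comm]
    exact Finset.sum_congr rfl fun j _ => by rw [← Finset.mul_sum, hβ]
  have square : ∑ v ∈ s, S v * S v * W v = ∑ j : ι, β j * β j := by
    have : ∀ v ∈ s, S v * S v * W v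
        = ∑ j : ι, ∑ l : ι, (β j * β l) * (u j v * u l v * W v) := by
      intro v _
      rw [hS]
      simp only
      rw [Finset.sum_mul_sum, Finset.sum_mul]
      refine Finset.sum_congr rfl fun j _ => ?_
      rw [Finset.sum_mul]
      exact Finset.sum_congr rfl fun l _ => by ring
    rw [Finset.sum_congr rfl this, Finset.sum_comm]
    have swap : ∀ j : ι, ∑ v ∈ s, ∑ l : ι, (β j * β l) * (u j v * u l v * W v)
        = ∑ l : ι, (β j * β l) * (if j = l then (1:ℝ) else 0) := by
      intro j
      rw [Finset.sum_comm]
      exact Finset.sum_congr rfl fun l _ => by rw [← Finset.mul_sum, horth j l]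
    rw [Finset.sum_congr rfl fun j _ => swap j]
    refine Finset.sum_congr rfl fun j _ => ?_
    rw [Finset.sum_eq_single j]
    · simp
    · intro l _ hl; rw [if_neg (fun h => hl h.symm), mul_zero]
    · intro h; exact absurd (Finset.mem_univ j) h
  have expand : ∑ v ∈ s, (ψ v - S v)^2 * W v
      = ∑ v ∈ s, ψ v * ψ v * W v - 2 * ∑ v ∈ s, ψ v * S v * W v
        + ∑ v ∈ s, S v * S v * W v := by
    rw [Finset.mul_sum, ← Finset.sum_sub_distrib, ← Finset.sum_add_distrib]
    exact Finset.sum_congr rfl fun v _ => by ring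
  rw [expand, cross, square] at hD
  have : ∑ j : ι, β j * β j = ∑ j : ι, (β j)^2 :=
    Finset.sum_congr rfl fun j _ => (sq (β j)).symm
  rw [this] at hD
  linarith


lemma ND_comb {ι : Type*} [Fintype ι] (g : (Fin n → ℤ) → ℝ) (c : ι → ℝ)
    (F : ι → (Fin n → ℤ) → ℝ) (v : Fin n → ℤ) :
    ND Ω (fun x => g x + ∑ j : ι, c j * F j x) v
      = ND Ω g v + ∑ j : ι, c j * ND Ω (F j) v := by
  unfold ND
  have term : ∀ i : Fin n,
      ((if v + eV n i ∈ Ω then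
          (g v + ∑ j : ι, c j * F j v) - (g (v + eV n i) + ∑ j : ι, c j * F j (v + eV n i))
        else 0) +
       (if v - eV n i ∈ Ω then
          (g v + ∑ j : ι, c j * F j v) - (g (v - eV n i) + ∑ j : ι, c j * F j (v - eV n i))
        else 0))
      = ((if v + eV n i ∈ Ω then g v - g (v + eV n i) else 0) +
         (if v - eV n i ∈ Ω then g v - g (v - eV n i) else 0))
        + ∑ j : ι, c j *
          ((if v + eV n i ∈ Ω then F j v - F j (v + eV n i) else 0) +
           (if v - eV n i ∈ Ω then F j v - F j (v - eV n i) else 0)) := by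
    intro i
    have e1 : (if v + eV n i ∈ Ω then
          (g v + ∑ j : ι, c j * F j v) - (g (v + eV n i) + ∑ j : ι, c j * F j (v + eV n i))
        else 0)
        = (if v + eV n i ∈ Ω then g v - g (v + eV n i) else 0)
          + ∑ j : ι, c j * (if v + eV n i ∈ Ω then F j v - F j (v + eV n i) else 0) := by
      split_ifs with h
      · have hs2 : ∑ j : ι, c j * (F j v - F j (v + eV n i))
            = ∑ j : ι, c j * F j v - ∑ j : ι, c j * F j (v + eV n i) := by
          rw [← Finset.sum_sub_distrib]
          exact Finset.sum_congr rfl fun j _ => by ring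
        rw [hs2]
        ring
      · simp
    have e2 : (if v - eV n i ∈ Ω then
          (g v + ∑ j : ι, c j * F j v) - (g (v - eV n i) + ∑ j : ι, c j * F j (v - eV n i))
        else 0)
        = (if v - eV n i ∈ Ω then g v - g (v - eV n i) else 0)
          + ∑ j : ι, c j * (if v - eV n i ∈ Ω then F j v - F j (v - eV n i) else 0) := by
      split_ifs with h
      · have hs2 : ∑ j : ι, c j * (F j v - F j (v - eV n i))
            = ∑ j : ι, c j * F j v - ∑ j : ι, c j * F j (v - eV n i) := by
          rw [← Finset.sum_sub_distrib]
          exact Finset.sum_congr rfl fun j _ => by ring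
        rw [hs2]
        ring
      · simp
    rw [e1, e2]
    have hT : ∑ j : ι, c j * ((if v + eV n i ∈ Ω then F j v - F j (v + eV n i) else 0) +
           (if v - eV n i ∈ Ω then F j v - F j (v - eV n i) else 0))
        = ∑ j : ι, c j * (if v + eV n i ∈ Ω then F j v - F j (v + eV n i) else 0)
          + ∑ j : ι, c j * (if v - eV n i ∈ Ω then F j v - F j (v - eV n i) else 0) := by
      rw [← Finset.sum_add_distrib]
      exact Finset.sum_congr rfl fun j _ => by ring
    rw [hT]
    ring
  rw [Finset.sum_congr rfl fun i _ => term i, Finset.sum_add_distrib]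
  congr 1
  rw [Finset.sum_comm]
  exact Finset.sum_congr rfl fun j _ => by rw [Finset.mul_sum]


lemma dI_sq_le (i : Fin n) (v : Fin n → ℤ) :
    dI Ω i v * dI Ω i v ≤ latDegi n Ω v i := by
  unfold dI latDegi
  split_ifs <;> norm_num

lemma latEi_card_pos (hΩ : Ω.Nonempty) (i : Fin n) : 0 < ((latEi n Ω i).card : ℝ) := by
  have : (latEi n Ω i).Nonempty := hΩ.mono (Finset.subset_union_left)
  exact_mod_cast Finset.card_pos.mpr this

end Aux

/-- for a nonempty finite subset `Ω` of the integer lattice `ℤⁿ`, with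
`Ω̃` carrying the normalized weight, the first `n` positive Steklov eigenvalues
`mu` of the DtN map `T⁰` (listed ascending with an orthonormal complete family of
eigenfunctions `φ`) satisfy
`λ₁ + ⋯ + λ_n ≤ ∑_{v ∈ δΩ} (deg v)⁻¹ ∑ᵢ degᵢ v / |Eᵢ(Ω̃)|` and consequently
`λ₁ + ⋯ + λ_n ≤ |δΩ| / minᵢ |Eᵢ(Ω̃)|`. -/
theorem steklov_sum_lattice (n : ℕ) (hn : 0 < n) (Ω : Finset (Fin n → ℤ))
    (hΩ : Ω.Nonempty) (bd : Finset (Fin n → ℤ))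
    (hbd : ∀ x, x ∈ bd ↔ x ∉ Ω ∧ ∃ y ∈ Ω, (latticeGraph n).Adj x y)
    (N : ℕ) (mu : Fin N → ℝ) (φ : Fin N → ((Fin n → ℤ) → ℝ))
    (hmono : Monotone mu) (hpos : ∀ j, 0 < mu j)
    (hsupp : ∀ j, ∀ x, x ∉ bd → φ j x = 0)
    (horth : ∀ j l, (∑ v ∈ bd, φ j v * φ l v * latDeg n Ω v) =
      if j = l then (1 : ℝ) else 0)
    (heig : ∀ j, ∃ f : (Fin n → ℤ) → ℝ,
      (∀ x ∈ Ω, (∑ i, (2 * f x - f (x + eV n i) - f (x - eV n i))) = 0) ∧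
      (∀ v ∈ bd, f v = φ j v) ∧
      (∀ v ∈ bd, latN n Ω f v = mu j * φ j v))
    (hcomp : ∀ ψ : (Fin n → ℤ) → ℝ, (∀ x, x ∉ bd → ψ x = 0) →
      (∀ j, (∑ v ∈ bd, ψ v * φ j v * latDeg n Ω v) = 0) →
      ∃ f : (Fin n → ℤ) → ℝ,
        (∀ x ∈ Ω, (∑ i, (2 * f x - f (x + eV n i) - f (x - eV n i))) = 0) ∧
        (∀ v ∈ bd, f v = ψ v) ∧ (∀ v ∈ bd, latN n Ω f v = 0)) :
    ∃ h : n ≤ N,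
      ((∑ i : Fin n, mu (Fin.castLE h i)) ≤
        ∑ v ∈ bd, (latDeg n Ω v)⁻¹ *
          ∑ i : Fin n, latDegi n Ω v i / ((latEi n Ω i).card : ℝ)) ∧
      (∑ i : Fin n, mu (Fin.castLE h i)) ≤
        (bd.card : ℝ) / ⨅ i : Fin n, ((latEi n Ω i).card : ℝ) := by
  classical
  choose F hFh hFb hFN using heig
  have hdegne : ∀ v ∈ bd, latDeg n Ω v ≠ 0 :=
    fun v hv => ne_of_gt (latDeg_pos Ω bd hbd hv)
  set c : Fin n → Fin N → ℝ :=
    fun i j => ∑ v ∈ bd, ((v i : ℤ) : ℝ) * φ j v * latDeg n Ω v with hc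
  -- normal derivative of eigen-extensions
  have hNDF : ∀ (j : Fin N), ∀ v ∈ bd,
      ND Ω (F j) v = latDeg n Ω v * (mu j * φ j v) := by
    intro j v hv
    have h := hFN j v hv
    rw [latN_eq] at h
    have hd := hdegne v hv
    rw [← h]
    field_simp
  -- harmonic extension of the i-th coordinate with controlled normal derivative
  have key : ∀ i : Fin n, ∃ H : (Fin n → ℤ) → ℝ,
      (∀ x ∈ Ω, (∑ k, (2 * H x - H (x + eV n k) - H (x - eV n k))) = 0) ∧
      (∀ v ∈ bd, H v = ((v i : ℤ) : ℝ)) ∧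
      (∀ v ∈ bd, ND Ω H v = ∑ j, mu j * c i j * (φ j v * latDeg n Ω v)) := by
    intro i
    set ψ : (Fin n → ℤ) → ℝ :=
      fun x => (if x ∈ bd then ((x i : ℤ) : ℝ) else 0) - ∑ j, c i j * φ j x with hψ
    have hψsupp : ∀ x, x ∉ bd → ψ x = 0 := by
      intro x hx
      rw [hψ]; simp only
      rw [if_neg hx, Finset.sum_eq_zero fun j _ => by rw [hsupp j x hx, mul_zero]]
      ring
    have hψorth : ∀ j, (∑ v ∈ bd, ψ v * φ j v * latDeg n Ω v) = 0 := by
      intro j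
      have expand : ∀ v ∈ bd, ψ v * φ j v * latDeg n Ω v
          = ((v i : ℤ) : ℝ) * φ j v * latDeg n Ω v
            - ∑ l, c i l * (φ l v * φ j v * latDeg n Ω v) := by
        intro v hv
        rw [hψ]; simp only
        rw [if_pos hv]
        have : ∑ l, c i l * (φ l v * φ j v * latDeg n Ω v)
            = (∑ l, c i l * φ l v) * (φ j v * latDeg n Ω v) := by
          rw [Finset.sum_mul]
          exact Finset.sum_congr rfl fun l _ => by ring
        rw [this]
        ring
      rw [Finset.sum_congr rfl expand, Finset.sum_sub_distrib]
      have h1 : ∑ v ∈ bd, ((v i : ℤ) : ℝ) * φ j v * latDeg n Ω v = c i j := rfl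
      have h2 : ∑ v ∈ bd, ∑ l, c i l * (φ l v * φ j v * latDeg n Ω v) = c i j := by
        rw [Finset.sum_comm]
        have inner : ∀ l : Fin N, ∑ v ∈ bd, c i l * (φ l v * φ j v * latDeg n Ω v)
            = (if l = j then c i l else 0) := by
          intro l
          rw [← Finset.mul_sum, horth l j, mul_ite, mul_one, mul_zero]
        rw [Finset.sum_congr rfl fun l _ => inner l]
        rw [Finset.sum_ite_eq' Finset.univ j (fun l => c i l)]
        simp
      rw [h1, h2, sub_self]
    obtain ⟨g, hgh, hgb, hgN⟩ := hcomp ψ hψsupp hψorth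
    refine ⟨fun x => g x + ∑ j, c i j * F j x, ?_, ?_, ?_⟩
    · -- harmonicity
      intro x hx
      have term : ∀ k : Fin n,
          (2 * (g x + ∑ j, c i j * F j x)
            - (g (x + eV n k) + ∑ j, c i j * F j (x + eV n k))
            - (g (x - eV n k) + ∑ j, c i j * F j (x - eV n k)))
          = (2 * g x - g (x + eV n k) - g (x - eV n k))
            + ∑ j, c i j * (2 * F j x - F j (x + eV n k) - F j (x - eV n k)) := by
        intro k
        have hs : ∑ j, c i j * (2 * F j x - F j (x + eV n k) - F j (x - eV n k))
            = 2 * (∑ j, c i j * F j x) - (∑ j, c i j * F j (x + eV n k))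
              - (∑ j, c i j * F j (x - eV n k)) := by
          rw [Finset.mul_sum, ← Finset.sum_sub_distrib, ← Finset.sum_sub_distrib]
          exact Finset.sum_congr rfl fun j _ => by ring
        rw [hs]
        ring
      rw [Finset.sum_congr rfl fun k _ => term k, Finset.sum_add_distrib, hgh x hx]
      rw [Finset.sum_comm]
      rw [Finset.sum_congr rfl fun j (_ : j ∈ Finset.univ) => by
        rw [← Finset.mul_sum, hFh j x hx, mul_zero]]
      simp
    · -- boundary values
      intro v hv
      show g v + ∑ j, c i j * F j v = ((v i : ℤ) : ℝ)
      rw [Finset.sum_congr rfl fun j (_ : j ∈ Finset.univ) => by rw [hFb j v hv]]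
      rw [hgb v hv, hψ]
      simp only
      rw [if_pos hv]
      ring
    · -- normal derivative
      intro v hv
      rw [ND_comb]
      have hg0 : ND Ω g v = 0 := by
        have h := hgN v hv
        rw [latN_eq] at h
        rcases mul_eq_zero.mp h with h' | h'
        · exact absurd h' (inv_ne_zero (hdegne v hv))
        · exact h'
      rw [hg0, zero_add]
      refine Finset.sum_congr rfl fun j _ => ?_
      rw [hNDF j v hv]
      ring
  choose H hHh hHb hHN using key
  -- the Gram identity
  have gram : ∀ i l : Fin n, ∑ j, mu j * (c i j * c l j)
      = (if i = l then ((latEi n Ω i).card : ℝ) else 0) := by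
    intro i l
    have e1 : ∑ v ∈ bd, Xc l v * ND Ω (H i) v = ∑ j, mu j * (c i j * c l j) := by
      have expand : ∀ v ∈ bd, Xc l v * ND Ω (H i) v
          = ∑ j, mu j * (c i j * (((v l : ℤ) : ℝ) * φ j v * latDeg n Ω v)) := by
        intro v hv
        rw [hHN i v hv, Finset.mul_sum]
        exact Finset.sum_congr rfl fun j _ => by unfold Xc; ring
      rw [Finset.sum_congr rfl expand, Finset.sum_comm]
      refine Finset.sum_congr rfl fun j _ => ?_
      have : ∀ v ∈ bd, mu j * (c i j * (((v l : ℤ) : ℝ) * φ j v * latDeg n Ω v))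
          = (mu j * c i j) * (((v l : ℤ) : ℝ) * φ j v * latDeg n Ω v) := by
        intro v _; ring
      rw [Finset.sum_congr rfl this, ← Finset.mul_sum]
      rw [hc]
      ring
    have e2 : ∑ v ∈ bd, Xc l v * ND Ω (H i) v = ∑ v ∈ bd, Xc i v * ND Ω (Xc l) v := by
      rw [← green_s16 Ω bd hbd (H i) (Xc l) (hHh i), Een_symm,
        green_s16 Ω bd hbd (Xc l) (H i) (fun x _ => Xc_harm (n := n) l x)]
      refine Finset.sum_congr rfl fun v hv => ?_
      rw [hHb i v hv]
      rfl
    have e3 : ∑ v ∈ bd, Xc i v * ND Ω (Xc l) v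
        = if l = i then ((latEi n Ω l).card : ℝ) else 0 := by
      rw [← green_s16 Ω bd hbd (Xc l) (Xc i) (fun x _ => Xc_harm (n := n) l x), Een_coord]
    rw [← e1, e2, e3]
    rcases eq_or_ne i l with h | h
    · subst h; simp
    · rw [if_neg (fun hh => h hh.symm), if_neg h]
  -- the component identity
  have beta : ∀ (i : Fin n) (j : Fin N),
      ∑ v ∈ bd, ((latDeg n Ω v)⁻¹ * dI Ω i v) * φ j v * latDeg n Ω v
        = mu j * c i j := by
    intro i j
    have e0 : ∀ v ∈ bd, ((latDeg n Ω v)⁻¹ * dI Ω i v) * φ j v * latDeg n Ω v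
        = F j v * ND Ω (Xc i) v := by
      intro v hv
      rw [ND_coord, hFb j v hv]
      have hd := hdegne v hv
      field_simp
    rw [Finset.sum_congr rfl e0,
      ← green_s16 Ω bd hbd (Xc i) (F j) (fun x _ => Xc_harm (n := n) i x), Een_symm,
      green_s16 Ω bd hbd (F j) (Xc i) (hFh j)]
    have : ∀ v ∈ bd, Xc i v * ND Ω (F j) v
        = (mu j) * (((v i : ℤ) : ℝ) * φ j v * latDeg n Ω v) := by
      intro v hv
      rw [hNDF j v hv]
      unfold Xc
      ring
    rw [Finset.sum_congr rfl this, ← Finset.mul_sum, hc]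
  -- Bessel inequality no. 1
  have bessel1 : ∀ i : Fin n, ∑ j, (mu j * c i j)^2
      ≤ ∑ v ∈ bd, dI Ω i v * dI Ω i v * (latDeg n Ω v)⁻¹ := by
    intro i
    have hb := bessel bd (latDeg n Ω) (fun v _ => latDeg_nonneg Ω v) φ horth
      (fun v => (latDeg n Ω v)⁻¹ * dI Ω i v)
    rw [Finset.sum_congr rfl (fun j (_ : j ∈ Finset.univ) => by rw [beta i j])] at hb
    refine hb.trans (le_of_eq (Finset.sum_congr rfl fun v hv => ?_))
    have hd := hdegne v hv
    field_simp
  have cardpos := latEi_card_pos Ω hΩ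
  -- the orthonormal coefficient matrix
  set w : Fin n → Fin N → ℝ :=
    fun i j => Real.sqrt (mu j) * c i j / Real.sqrt ((latEi n Ω i).card : ℝ) with hw
  have worth : ∀ i l : Fin n, ∑ j, w i j * w l j * (1:ℝ)
      = if i = l then (1:ℝ) else 0 := by
    intro i l
    have term : ∀ j : Fin N, w i j * w l j * (1:ℝ)
        = (mu j * (c i j * c l j))
          / (Real.sqrt ((latEi n Ω i).card : ℝ) * Real.sqrt ((latEi n Ω l).card : ℝ)) := by
      intro j
      rw [hw]
      simp only
      rw [div_mul_div_comm, mul_one]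
      congr 1
      rw [show Real.sqrt (mu j) * c i j * (Real.sqrt (mu j) * c l j)
          = (Real.sqrt (mu j) * Real.sqrt (mu j)) * (c i j * c l j) from by ring,
        Real.mul_self_sqrt (le_of_lt (hpos j))]
    rw [Finset.sum_congr rfl fun j _ => term j, ← Finset.sum_div, gram i l]
    rcases eq_or_ne i l with h | h
    · subst h
      rw [if_pos rfl, if_pos rfl,
        Real.mul_self_sqrt (le_of_lt (cardpos i)), div_self (ne_of_gt (cardpos i))]
    · rw [if_neg h, if_neg h, zero_div]
  have rowsum : ∀ i : Fin n, ∑ j, (w i j)^2 = 1 := by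
    intro i
    have term : ∀ j : Fin N, (w i j)^2
        = mu j * (c i j * c i j) / ((latEi n Ω i).card : ℝ) := by
      intro j
      rw [hw]
      simp only
      rw [div_pow, Real.sq_sqrt (le_of_lt (cardpos i)), mul_pow,
        Real.sq_sqrt (le_of_lt (hpos j))]
      ring_nf
    rw [Finset.sum_congr rfl fun j _ => term j, ← Finset.sum_div, gram i i, if_pos rfl,
      div_self (ne_of_gt (cardpos i))]
  -- Bessel inequality no. 2 : column sums are at most 1
  have tle1 : ∀ j : Fin N, ∑ i : Fin n, (w i j)^2 ≤ 1 := by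
    intro j
    have hb := bessel (Finset.univ : Finset (Fin N)) (fun _ => (1:ℝ))
      (fun _ _ => zero_le_one) w worth (fun j' => if j' = j then (1:ℝ) else 0)
    have inner : ∀ i : Fin n,
        (∑ j' : Fin N, (if j' = j then (1:ℝ) else 0) * w i j' * 1) = w i j := by
      intro i
      rw [Finset.sum_congr rfl (fun j' (_ : j' ∈ Finset.univ) => by
        rw [show (if j' = j then (1:ℝ) else 0) * w i j' * 1
          = (if j' = j then w i j' else 0) from by split_ifs <;> ring]),
        Finset.sum_ite_eq' Finset.univ j (fun j' => w i j')]
      simp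
    rw [Finset.sum_congr rfl fun i _ => by rw [inner i]] at hb
    refine hb.trans (le_of_eq ?_)
    rw [Finset.sum_congr rfl (fun j' (_ : j' ∈ Finset.univ) => by
      rw [show (if j' = j then (1:ℝ) else 0) * (if j' = j then (1:ℝ) else 0) * 1
        = (if j' = j then (1:ℝ) else 0) from by split_ifs <;> ring]),
      Finset.sum_ite_eq' Finset.univ j (fun _ => (1:ℝ))]
    simp
  -- dimension bound
  have hts : ∑ j : Fin N, ∑ i : Fin n, (w i j)^2 = (n : ℝ) := by
    rw [Finset.sum_comm, Finset.sum_congr rfl fun i _ => rowsum i]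
    simp
  have hnN : n ≤ N := by
    have : (n : ℝ) ≤ (N : ℝ) := by
      rw [← hts]
      calc ∑ j : Fin N, ∑ i : Fin n, (w i j)^2 ≤ ∑ j : Fin N, (1:ℝ) :=
        Finset.sum_le_sum fun j _ => tle1 j
      _ = (N : ℝ) := by simp
    exact_mod_cast this
  -- Chebyshev-type step
  have hlast : n - 1 < n := by omega
  have hA : ∀ k : Fin n, mu (Fin.castLE hnN k) - mu (Fin.castLE hnN ⟨n-1, hlast⟩)
      ≤ (mu (Fin.castLE hnN k) - mu (Fin.castLE hnN ⟨n-1, hlast⟩))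
        * ∑ i : Fin n, (w i (Fin.castLE hnN k))^2 := by
    intro k
    have hKle : mu (Fin.castLE hnN k) ≤ mu (Fin.castLE hnN ⟨n-1, hlast⟩) := by
      apply hmono
      rw [Fin.le_def]
      simp only [Fin.coe_castLE]
      omega
    have h1 := tle1 (Fin.castLE hnN k)
    have h0 : (0:ℝ) ≤ ∑ i : Fin n, (w i (Fin.castLE hnN k))^2 :=
      Finset.sum_nonneg fun i _ => sq_nonneg _
    nlinarith
  have hB : ∑ k : Fin n, (mu (Fin.castLE hnN k) - mu (Fin.castLE hnN ⟨n-1, hlast⟩))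
      ≤ ∑ j : Fin N, (mu j - mu (Fin.castLE hnN ⟨n-1, hlast⟩)) * ∑ i : Fin n, (w i j)^2 := by
    calc ∑ k : Fin n, (mu (Fin.castLE hnN k) - mu (Fin.castLE hnN ⟨n-1, hlast⟩))
        ≤ ∑ k : Fin n, (mu (Fin.castLE hnN k) - mu (Fin.castLE hnN ⟨n-1, hlast⟩))
          * ∑ i : Fin n, (w i (Fin.castLE hnN k))^2 := Finset.sum_le_sum fun k _ => hA k
      _ = ∑ j ∈ Finset.univ.image (Fin.castLE hnN),
          (mu j - mu (Fin.castLE hnN ⟨n-1, hlast⟩)) * ∑ i : Fin n, (w i j)^2 := by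
          rw [Finset.sum_image (fun a _ b _ hab => Fin.castLE_injective hnN hab)]
      _ ≤ ∑ j : Fin N, (mu j - mu (Fin.castLE hnN ⟨n-1, hlast⟩)) * ∑ i : Fin n, (w i j)^2 := by
          apply Finset.sum_le_sum_of_subset_of_nonneg (Finset.subset_univ _)
          intro j _ hj
          have hjval : ¬ (j.val < n) := by
            intro hlt
            exact hj (Finset.mem_image.mpr ⟨⟨j.val, hlt⟩, Finset.mem_univ _, Fin.ext rfl⟩)
          have hνj : mu (Fin.castLE hnN ⟨n-1, hlast⟩) ≤ mu j := by
            apply hmono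
            rw [Fin.le_def]
            simp only [Fin.coe_castLE]
            omega
          exact mul_nonneg (sub_nonneg.mpr hνj) (Finset.sum_nonneg fun i _ => sq_nonneg _)
  have step1 : ∑ k : Fin n, mu (Fin.castLE hnN k)
      ≤ ∑ j : Fin N, mu j * ∑ i : Fin n, (w i j)^2 := by
    have e1 : ∑ k : Fin n, (mu (Fin.castLE hnN k) - mu (Fin.castLE hnN ⟨n-1, hlast⟩))
        = ∑ k : Fin n, mu (Fin.castLE hnN k) - n * mu (Fin.castLE hnN ⟨n-1, hlast⟩) := by
      rw [Finset.sum_sub_distrib, Finset.sum_const, Finset.card_univ, Fintype.card_fin,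
        nsmul_eq_mul]
    have e2 : ∑ j : Fin N, (mu j - mu (Fin.castLE hnN ⟨n-1, hlast⟩)) * ∑ i : Fin n, (w i j)^2
        = ∑ j : Fin N, mu j * ∑ i : Fin n, (w i j)^2
          - mu (Fin.castLE hnN ⟨n-1, hlast⟩) * ∑ j : Fin N, ∑ i : Fin n, (w i j)^2 := by
      rw [Finset.mul_sum, ← Finset.sum_sub_distrib]
      exact Finset.sum_congr rfl fun j _ => by ring
    rw [e1, e2, hts] at hB
    linarith
  -- energy estimate
  have step2 : ∑ j : Fin N, mu j * ∑ i : Fin n, (w i j)^2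
      ≤ ∑ v ∈ bd, (latDeg n Ω v)⁻¹ *
          ∑ i : Fin n, latDegi n Ω v i / ((latEi n Ω i).card : ℝ) := by
    have swap : ∑ j : Fin N, mu j * ∑ i : Fin n, (w i j)^2
        = ∑ i : Fin n, ∑ j : Fin N, mu j * (w i j)^2 := by
      rw [Finset.sum_comm]
      exact Finset.sum_congr rfl fun j _ => Finset.mul_sum _ _ _
    have peri : ∀ i : Fin n, ∑ j : Fin N, mu j * (w i j)^2
        = (∑ j : Fin N, (mu j * c i j)^2) / ((latEi n Ω i).card : ℝ) := by
      intro i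
      rw [Finset.sum_div]
      refine Finset.sum_congr rfl fun j _ => ?_
      rw [hw]
      simp only
      rw [div_pow, Real.sq_sqrt (le_of_lt (cardpos i)), mul_pow,
        Real.sq_sqrt (le_of_lt (hpos j))]
      ring
    calc ∑ j : Fin N, mu j * ∑ i : Fin n, (w i j)^2
        = ∑ i : Fin n, (∑ j : Fin N, (mu j * c i j)^2) / ((latEi n Ω i).card : ℝ) := by
          rw [swap]; exact Finset.sum_congr rfl fun i _ => peri i
      _ ≤ ∑ i : Fin n, (∑ v ∈ bd, dI Ω i v * dI Ω i v * (latDeg n Ω v)⁻¹)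
            / ((latEi n Ω i).card : ℝ) :=
          Finset.sum_le_sum fun i _ => (div_le_div_iff_of_pos_right (cardpos i)).mpr (bessel1 i)
      _ = ∑ v ∈ bd, ∑ i : Fin n,
            (dI Ω i v * dI Ω i v * (latDeg n Ω v)⁻¹) / ((latEi n Ω i).card : ℝ) := by
          rw [Finset.sum_comm]
          exact Finset.sum_congr rfl fun i _ => Finset.sum_div _ _ _
      _ ≤ ∑ v ∈ bd, (latDeg n Ω v)⁻¹ *
            ∑ i : Fin n, latDegi n Ω v i / ((latEi n Ω i).card : ℝ) := by
          refine Finset.sum_le_sum fun v _ => ?_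
          rw [Finset.mul_sum]
          refine Finset.sum_le_sum fun i _ => ?_
          have h1 : dI Ω i v * dI Ω i v / ((latEi n Ω i).card : ℝ)
              ≤ latDegi n Ω v i / ((latEi n Ω i).card : ℝ) :=
            (div_le_div_iff_of_pos_right (cardpos i)).mpr (dI_sq_le Ω i v)
          calc dI Ω i v * dI Ω i v * (latDeg n Ω v)⁻¹ / ((latEi n Ω i).card : ℝ)
              = (latDeg n Ω v)⁻¹ * (dI Ω i v * dI Ω i v / ((latEi n Ω i).card : ℝ)) := by
                ring
            _ ≤ (latDeg n Ω v)⁻¹ * (latDegi n Ω v i / ((latEi n Ω i).card : ℝ)) :=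
                mul_le_mul_of_nonneg_left h1 (inv_nonneg.mpr (latDeg_nonneg Ω v))
  have main1 := step1.trans step2
  -- second bound
  have hne : Nonempty (Fin n) := ⟨⟨0, hn⟩⟩
  have hm1 : (1:ℝ) ≤ ⨅ i : Fin n, ((latEi n Ω i).card : ℝ) := by
    refine le_ciInf fun i => ?_
    have : 1 ≤ (latEi n Ω i).card :=
      Finset.card_pos.mpr (hΩ.mono Finset.subset_union_left)
    exact_mod_cast this
  have hm0 : (0:ℝ) < ⨅ i : Fin n, ((latEi n Ω i).card : ℝ) := lt_of_lt_of_le one_pos hm1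
  have hmle : ∀ i : Fin n, (⨅ i : Fin n, ((latEi n Ω i).card : ℝ)) ≤ ((latEi n Ω i).card : ℝ) :=
    fun i => ciInf_le (Finite.bddBelow_range _) i
  have main2 : (∑ v ∈ bd, (latDeg n Ω v)⁻¹ *
          ∑ i : Fin n, latDegi n Ω v i / ((latEi n Ω i).card : ℝ))
      ≤ (bd.card : ℝ) / ⨅ i : Fin n, ((latEi n Ω i).card : ℝ) := by
    have per_v : ∀ v ∈ bd, (latDeg n Ω v)⁻¹ *
        ∑ i : Fin n, latDegi n Ω v i / ((latEi n Ω i).card : ℝ)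
        ≤ 1 / ⨅ i : Fin n, ((latEi n Ω i).card : ℝ) := by
      intro v hv
      have h1 : ∑ i : Fin n, latDegi n Ω v i / ((latEi n Ω i).card : ℝ)
          ≤ ∑ i : Fin n, latDegi n Ω v i / ⨅ i : Fin n, ((latEi n Ω i).card : ℝ) :=
        Finset.sum_le_sum fun i _ =>
          div_le_div_of_nonneg_left (latDegi_nonneg Ω v i) hm0 (hmle i)
      have h2 : ∑ i : Fin n, latDegi n Ω v i / ⨅ i : Fin n, ((latEi n Ω i).card : ℝ)
          = latDeg n Ω v / ⨅ i : Fin n, ((latEi n Ω i).card : ℝ) := by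
        rw [← Finset.sum_div]
        rfl
      calc (latDeg n Ω v)⁻¹ * ∑ i : Fin n, latDegi n Ω v i / ((latEi n Ω i).card : ℝ)
          ≤ (latDeg n Ω v)⁻¹ * (latDeg n Ω v / ⨅ i : Fin n, ((latEi n Ω i).card : ℝ)) :=
            mul_le_mul_of_nonneg_left (h1.trans_eq h2) (inv_nonneg.mpr (latDeg_nonneg Ω v))
        _ = 1 / ⨅ i : Fin n, ((latEi n Ω i).card : ℝ) := by
            rw [eq_div_iff (ne_of_gt hm0)]
            field_simp [hdegne v hv]
    calc ∑ v ∈ bd, (latDeg n Ω v)⁻¹ *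
          ∑ i : Fin n, latDegi n Ω v i / ((latEi n Ω i).card : ℝ)
        ≤ ∑ v ∈ bd, 1 / ⨅ i : Fin n, ((latEi n Ω i).card : ℝ) :=
          Finset.sum_le_sum per_v
      _ = (bd.card : ℝ) / ⨅ i : Fin n, ((latEi n Ω i).card : ℝ) := by
          rw [Finset.sum_const, nsmul_eq_mul]
          ring
  exact ⟨hnN, main1, main1.trans main2⟩

end GraphHodge
end
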